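/- arXiv:2110.15031 — 4 statements merged into one kernel-verified Lean document; each statement's English description precedes it below -/
import Mathlib

section
/- Let K be a field, n ≥ 3 an integer, and M_{n,k} = K[V(T'_{n,k})]/I(T'_{n,k}). Then sdepth(M_{n,2}) ≤ n − 1, and for every integer k ≥ 3, sdepth(M_{n,k}) ≤ (n−1)^{k−1} + sdepth(M_{n,k−3}). -/
open MvPolynomial

/-- Vertices of the perfect `(n-1)`-ary tree `T'_{n,k}`: level `a` has `(n-1)^a` vertices. -/
abbrev AryVert (n k : ℕ) : Type := Σ a : Fin (k + 1), Fin ((n - 1) ^ (a : ℕ))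

/-- The perfect `(n-1)`-ary tree `T'_{n,k}`: the root has degree `n-1`, all other internal
vertices have degree `n`, and all leaves are at distance `k` from the root.  The vertex `j`
at level `a+1` is a child of vertex `j/(n-1)` at level `a`. -/
def aryTree (n k : ℕ) : SimpleGraph (AryVert n k) :=
  SimpleGraph.fromRel (fun v w =>
    (v.1 : ℕ) + 1 = (w.1 : ℕ) ∧ (v.2 : ℕ) = (w.2 : ℕ) / (n - 1))

/-- The edge ideal `I(G)` of a graph `G`, inside the polynomial ring over `K`
with variables the vertices of `G`. -/
noncomputable def edgeIdeal (K : Type) [Field K] {V : Type} (G : SimpleGraph V) :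
    Ideal (MvPolynomial V K) :=
  Ideal.span {p | ∃ v w, G.Adj v w ∧ p = X v * X w}

/-- The Stanley space `u·K[Z]` inside `S/I`, spanned over `K` by the images of the
monomials `x^u · x^f` with `support f ⊆ Z`. -/
noncomputable def stanleySpace (K : Type) [Field K] {V : Type}
    (I : Ideal (MvPolynomial V K)) (u : V →₀ ℕ) (Z : Set V) :
    Submodule K (MvPolynomial V K ⧸ I) :=
  Submodule.span K {m | ∃ f : V →₀ ℕ, (f.support : Set V) ⊆ Z ∧
    m = Ideal.Quotient.mk I (monomial (u + f) (1 : K))}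

/-- A Stanley decomposition of `S/I`: a finite family of Stanley spaces `u_j·K[Z_j]`,
each of them free (that is, the monomial multiples of `u_j` are `K`-linearly independent),
whose internal direct sum as `K`-vector spaces is all of `S/I`. -/
def IsStanleyDecomp (K : Type) [Field K] {V : Type} (I : Ideal (MvPolynomial V K))
    (r : ℕ) (u : Fin r → (V →₀ ℕ)) (Z : Fin r → Finset V) : Prop :=
  DirectSum.IsInternal (fun j : Fin r => stanleySpace K I (u j) (Z j : Set V)) ∧
  ∀ j : Fin r, LinearIndependent K
    (fun f : {f : V →₀ ℕ // (f.support : Set V) ⊆ (Z j : Set V)} =>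
      Ideal.Quotient.mk I (monomial (u j + f.1) (1 : K)))

/-- The Stanley depth of `S/I`: the largest `d` such that there is a Stanley decomposition
all of whose Stanley spaces `u_j·K[Z_j]` satisfy `|Z_j| ≥ d`. -/
noncomputable def quotSdepth (K : Type) [Field K] (V : Type)
    (I : Ideal (MvPolynomial V K)) : ℕ :=
  sSup {d | ∃ (r : ℕ) (u : Fin r → (V →₀ ℕ)) (Z : Fin r → Finset V),
    IsStanleyDecomp K I r u Z ∧ ∀ j, d ≤ (Z j).card}


/-!
The monomials whose supports are independent sets of `G` form a `K`-basis of `S/I(G)`, so a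
Stanley decomposition of `S/I(G)` amounts to a partition of the independent exponent vectors
into cones `u_j + ℕ^{Z_j}` with `supp u_j ∪ Z_j` independent.

Let `G'` sit inside `G` as an induced subgraph and let `W` be an independent set of `G`, disjoint
from and not adjacent to `G'`, that dominates every other vertex. Extending an exponent vector of
`G'` by ones on `W` gives an independent exponent vector of `G`. A cone containing such an
extension has `W ⊆ supp u_j ∪ Z_j`, so by independence `supp u_j ∪ Z_j` lies in `G' ∪ W`.
Restricted to `G'`, these cones partition the independent exponent vectors of `G'`, with
`|Z'_j| ≥ |Z_j| - |W|`; hence `sdepth S/I(G) ≤ |W| + sdepth S/I(G')`. For `T'_{n,k+3}` take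
`G' = T'_{n,k}` and `W` the level `k + 2`; for `T'_{n,2}` take `G'` empty and `W` the level `1`.
-/

theorem Module.Basis.isInternal_span_image_iff {ι κ R M : Type*} [DecidableEq κ] [Ring R]
    [Nontrivial R] [AddCommGroup M] [Module R M] (b : Basis ι R M) (S : κ → Set ι) :
    DirectSum.IsInternal (fun j => Submodule.span R (b '' S j)) ↔ ∀ i, ∃! j, i ∈ S j := by
  rw [DirectSum.isInternal_submodule_iff_iSupIndep_and_iSup_eq_top]
  constructor
  · rintro ⟨hind, htop⟩ i
    have hi : b i ∈ ⨆ j, Submodule.span R (b '' S j) := htop ▸ Submodule.mem_top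
    rw [← Submodule.span_iUnion, ← Set.image_iUnion, b.self_mem_span_image,
      Set.mem_iUnion] at hi
    obtain ⟨j, hj⟩ := hi
    refine ⟨j, hj, fun k hk => by_contra fun hkj => b.ne_zero i ?_⟩
    exact Submodule.disjoint_def.mp (hind.pairwiseDisjoint hkj) _
      (b.self_mem_span_image.mpr hk) (b.self_mem_span_image.mpr hj)
  · intro h
    refine ⟨fun j => ?_, ?_⟩
    · have hsup : ⨆ (k) (_ : k ≠ j), Submodule.span R (b '' S k) =
          Submodule.span R (b '' ⋃ (k) (_ : k ≠ j), S k) := by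
        simp only [Set.image_iUnion, Submodule.span_iUnion]
      dsimp only
      rw [hsup]
      refine b.linearIndependent.disjoint_span_image (Set.disjoint_left.mpr fun i hij hi => ?_)
      obtain ⟨k, hkj, hik⟩ := Set.mem_iUnion₂.mp hi
      exact hkj ((h i).unique hik hij)
    · rw [← Submodule.span_iUnion, ← Set.image_iUnion,
        Set.iUnion_eq_univ_iff.mpr fun i => (h i).exists, Set.image_univ, b.span_eq]

theorem Finsupp.single_one_add_single_one_le_iff {V : Type*} {v w : V} (hvw : v ≠ w)
    {g : V →₀ ℕ} : single v 1 + single w 1 ≤ g ↔ g v ≠ 0 ∧ g w ≠ 0 := by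
  classical
  refine ⟨fun h => ⟨?_, ?_⟩, fun ⟨hv, hw⟩ x => ?_⟩
  · have := h v; simp [hvw] at this; omega
  · have := h w; simp [hvw.symm] at this; omega
  · simp only [coe_add, Pi.add_apply, single_apply]
    split_ifs <;> subst_vars <;> simp_all <;> omega

section EdgeIdeal

variable {V : Type} {K : Type} [Field K] {G : SimpleGraph V}

theorem mem_edgeIdeal_iff {p : MvPolynomial V K} :
    p ∈ edgeIdeal K G ↔ ∀ g ∈ p.support, ¬ G.IsIndepSet ↑g.support := by
  have hspan : edgeIdeal K G = Ideal.span ((fun s => monomial s (1 : K)) ''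
      {e | ∃ v w, G.Adj v w ∧ e = Finsupp.single v 1 + Finsupp.single w 1}) := by
    have hX (v w : V) :
        X v * X w = monomial (Finsupp.single v 1 + Finsupp.single w 1) (1 : K) := by
      simp [X, monomial_mul]
    simp only [edgeIdeal, hX]
    congr 1
    ext p
    constructor
    · rintro ⟨v, w, hvw, rfl⟩
      exact ⟨_, ⟨v, w, hvw, rfl⟩, rfl⟩
    · rintro ⟨_, ⟨v, w, hvw, rfl⟩, rfl⟩
      exact ⟨v, w, hvw, rfl⟩
  rw [hspan, mem_ideal_span_monomial_image]
  refine forall₂_congr fun g _ => ?_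
  simp only [Set.Pairwise, Finset.mem_coe, Finsupp.mem_support_iff, not_forall, exists_prop,
    not_not]
  constructor
  · rintro ⟨_, ⟨v, w, hvw, rfl⟩, hle⟩
    obtain ⟨hv, hw⟩ := (Finsupp.single_one_add_single_one_le_iff hvw.ne).mp hle
    exact ⟨v, hv, w, hw, hvw.ne, hvw⟩
  · rintro ⟨v, hv, w, hw, hne, hvw⟩
    exact ⟨_, ⟨v, w, hvw, rfl⟩,
      (Finsupp.single_one_add_single_one_le_iff hne).mpr ⟨hv, hw⟩⟩

variable (G) in
abbrev IndepExponent : Type := {g : V →₀ ℕ // G.IsIndepSet ↑g.support}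

theorem mk_monomial_eq_zero {g : V →₀ ℕ} (hg : ¬ G.IsIndepSet ↑g.support) (c : K) :
    Ideal.Quotient.mk (edgeIdeal K G) (monomial g c) = 0 := by
  classical
  refine Ideal.Quotient.eq_zero_iff_mem.mpr (mem_edgeIdeal_iff.mpr fun g' hg' => ?_)
  rwa [Finset.mem_singleton.mp (support_monomial_subset hg')]

theorem linearIndependent_mk_monomial_indepExponent :
    LinearIndependent K (fun g : IndepExponent G =>
      Ideal.Quotient.mk (edgeIdeal K G) (monomial g.1 (1 : K))) := by
  have hmon : LinearIndependent K (fun g : IndepExponent G => monomial g.1 (1 : K)) := by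
    have := (basisMonomials V K).linearIndependent.comp _
      (Subtype.val_injective (p := fun g : V →₀ ℕ => G.IsIndepSet ↑g.support))
    rwa [coe_basisMonomials] at this
  refine hmon.map (f := (Ideal.Quotient.mkₐ K (edgeIdeal K G)).toLinearMap) ?_
  rw [Submodule.disjoint_def]
  intro p hp hker
  have hindep : ↑p.support ⊆ {g : V →₀ ℕ | G.IsIndepSet ↑g.support} := by
    rwa [← mem_restrictSupport_iff (R := K), restrictSupport_eq_span, Set.image_eq_range]
  have hI : p ∈ edgeIdeal K G := by
    simpa [Ideal.Quotient.mkₐ_eq_mk, Ideal.Quotient.eq_zero_iff_mem] using hker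
  rw [← support_eq_empty, Finset.eq_empty_iff_forall_notMem]
  exact fun g hg => mem_edgeIdeal_iff.mp hI g hg (hindep hg)

theorem span_mk_monomial_indepExponent :
    ⊤ ≤ Submodule.span K (Set.range fun g : IndepExponent G =>
      Ideal.Quotient.mk (edgeIdeal K G) (monomial g.1 (1 : K))) := by
  rintro x -
  obtain ⟨p, rfl⟩ := Ideal.Quotient.mk_surjective x
  rw [p.as_sum, map_sum]
  refine Submodule.sum_mem _ fun g _ => ?_
  by_cases hg : G.IsIndepSet ↑g.support
  · have hsmul : Ideal.Quotient.mk (edgeIdeal K G) (monomial g (coeff g p)) =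
        coeff g p • Ideal.Quotient.mk (edgeIdeal K G) (monomial g 1) := by
      rw [← Ideal.Quotient.mkₐ_eq_mk K, ← map_smul, smul_monomial, smul_eq_mul, mul_one]
    rw [hsmul]
    exact Submodule.smul_mem _ _ (Submodule.subset_span ⟨⟨g, hg⟩, rfl⟩)
  · rw [mk_monomial_eq_zero hg]
    exact Submodule.zero_mem _

variable (K G) in
noncomputable def edgeIdealQuotBasis :
    Module.Basis (IndepExponent G) K (MvPolynomial V K ⧸ edgeIdeal K G) :=
  .mk linearIndependent_mk_monomial_indepExponent span_mk_monomial_indepExponent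

theorem edgeIdealQuotBasis_apply (g : IndepExponent G) :
    edgeIdealQuotBasis K G g = Ideal.Quotient.mk (edgeIdeal K G) (monomial g.1 (1 : K)) :=
  Module.Basis.mk_apply ..

def stanleyCone (u : V →₀ ℕ) (Z : Set V) : Set (V →₀ ℕ) :=
  (u + ·) '' {f | ↑f.support ⊆ Z}

theorem mem_stanleyCone_iff {u g : V →₀ ℕ} {Z : Set V} :
    g ∈ stanleyCone u Z ↔ ∀ v, u v ≤ g v ∧ (u v < g v → v ∈ Z) := by
  constructor
  · rintro ⟨f, hf, rfl⟩ v
    refine ⟨by simp, fun h => hf ?_⟩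
    simp only [Finsupp.coe_add, Pi.add_apply] at h
    simp only [Finset.mem_coe, Finsupp.mem_support_iff]
    omega
  · intro h
    refine ⟨g - u, fun v hv => (h v).2 ?_, add_tsub_cancel_of_le fun v => (h v).1⟩
    simp only [Finset.mem_coe, Finsupp.mem_support_iff, Finsupp.tsub_apply] at hv
    omega

theorem stanleySpace_edgeIdeal_eq_span (u : V →₀ ℕ) (Z : Set V) :
    stanleySpace K (edgeIdeal K G) u Z =
      Submodule.span K (edgeIdealQuotBasis K G '' {g | g.1 ∈ stanleyCone u Z}) := by
  refine le_antisymm (Submodule.span_le.mpr ?_) (Submodule.span_le.mpr ?_)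
  · rintro _ ⟨f, hf, rfl⟩
    by_cases hg : G.IsIndepSet ↑(u + f).support
    · exact Submodule.subset_span
        ⟨⟨u + f, hg⟩, ⟨f, hf, rfl⟩, edgeIdealQuotBasis_apply _⟩
    · rw [SetLike.mem_coe, mk_monomial_eq_zero hg]
      exact Submodule.zero_mem _
  · rintro _ ⟨g, ⟨f, hf, hg⟩, rfl⟩
    exact Submodule.subset_span ⟨f, hf, by rw [edgeIdealQuotBasis_apply, ← hg]⟩

def IsStanleyPartition {ι : Type*} (G : SimpleGraph V) (u : ι → V →₀ ℕ)
    (Z : ι → Finset V) : Prop :=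
  (∀ j, G.IsIndepSet (↑(u j).support ∪ ↑(Z j))) ∧
    ∀ g : V →₀ ℕ, G.IsIndepSet ↑g.support → ∃! j, g ∈ stanleyCone (u j) (Z j)

theorem linearIndependent_stanleySpace_iff (u : V →₀ ℕ) (Z : Finset V) :
    LinearIndependent K (fun f : {f : V →₀ ℕ // (f.support : Set V) ⊆ (Z : Set V)} =>
      Ideal.Quotient.mk (edgeIdeal K G) (monomial (u + f.1) (1 : K))) ↔
      G.IsIndepSet (↑u.support ∪ ↑Z) := by
  classical
  constructor
  · intro h
    set f₀ : V →₀ ℕ := Multiset.toFinsupp Z.val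
    have hf₀ : f₀.support = Z := by simp [f₀]
    by_contra hZ
    refine h.ne_zero ⟨f₀, hf₀.le⟩ (mk_monomial_eq_zero ?_ _)
    rwa [Finsupp.support_add_eq_union, hf₀, Finset.coe_union]
  · intro h
    have hindep (f : {f : V →₀ ℕ // (f.support : Set V) ⊆ (Z : Set V)}) :
        G.IsIndepSet ↑(u + f.1).support := by
      refine h.mono ?_
      rw [Finsupp.support_add_eq_union, Finset.coe_union]
      exact Set.union_subset_union_right _ f.2
    have := (edgeIdealQuotBasis K G).linearIndependent.comp (fun f => ⟨u + f.1, hindep f⟩)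
      fun f f' hff => Subtype.ext (add_left_cancel (congrArg Subtype.val hff))
    simpa [Function.comp_def, edgeIdealQuotBasis_apply] using this

theorem isStanleyDecomp_edgeIdeal_iff {r : ℕ} {u : Fin r → V →₀ ℕ}
    {Z : Fin r → Finset V} :
    IsStanleyDecomp K (edgeIdeal K G) r u Z ↔ IsStanleyPartition G u Z := by
  simp only [IsStanleyDecomp, stanleySpace_edgeIdeal_eq_span,
    Module.Basis.isInternal_span_image_iff, linearIndependent_stanleySpace_iff,
    IsStanleyPartition, Subtype.forall, Set.mem_ofPred_eq]
  exact and_comm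

namespace IsStanleyPartition

variable {ι κ : Type*} {u : ι → V →₀ ℕ} {Z : ι → Finset V}

theorem nonempty (h : IsStanleyPartition G u Z) : Nonempty ι :=
  ⟨(h.2 0 (by simp)).exists.choose⟩

theorem comp_equiv (h : IsStanleyPartition G u Z) (e : κ ≃ ι) :
    IsStanleyPartition G (u ∘ e) (Z ∘ e) :=
  ⟨fun k => h.1 (e k), fun g hg => by simpa using e.symm.existsUnique_congr_left.mp (h.2 g hg)⟩

theorem le_card [Fintype V] (h : IsStanleyPartition G u Z) {d : ℕ}
    (hd : ∀ j, d ≤ (Z j).card) : d ≤ Fintype.card V :=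
  have ⟨j⟩ := h.nonempty
  (hd j).trans (Finset.card_le_univ _)

end IsStanleyPartition

variable (K)

theorem quotSdepth_edgeIdeal_le {b : ℕ}
    (h : ∀ (d r : ℕ) (u : Fin r → V →₀ ℕ) (Z : Fin r → Finset V),
      IsStanleyPartition G u Z → (∀ j, d ≤ (Z j).card) → d ≤ b) :
    quotSdepth K V (edgeIdeal K G) ≤ b :=
  csSup_le' fun d ⟨r, u, Z, hdec, hd⟩ => h d r u Z (isStanleyDecomp_edgeIdeal_iff.mp hdec) hd

theorem quotSdepth_edgeIdeal_le_card [Fintype V] :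
    quotSdepth K V (edgeIdeal K G) ≤ Fintype.card V :=
  quotSdepth_edgeIdeal_le K fun _ _ _ _ h hd => h.le_card hd

theorem le_quotSdepth_edgeIdeal [Fintype V] {ι : Type*} [Fintype ι] {u : ι → V →₀ ℕ}
    {Z : ι → Finset V} (h : IsStanleyPartition G u Z) {d : ℕ} (hd : ∀ j, d ≤ (Z j).card) :
    d ≤ quotSdepth K V (edgeIdeal K G) := by
  classical
  refine le_csSup ⟨Fintype.card V, fun _ ⟨_, _, _, hdec, hd'⟩ =>
    (isStanleyDecomp_edgeIdeal_iff.mp hdec).le_card hd'⟩ ?_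
  let e := (Fintype.equivFin ι).symm
  exact ⟨Fintype.card ι, u ∘ e, Z ∘ e, isStanleyDecomp_edgeIdeal_iff.mpr (h.comp_equiv e),
    fun j => hd (e j)⟩

end EdgeIdeal

section Separator

variable {V V' : Type} {G : SimpleGraph V} {G' : SimpleGraph V'}

noncomputable def extendByOnes (e : V' ↪ V) (W : Finset V) (h : V' →₀ ℕ) : V →₀ ℕ :=
  h.embDomain e + Finsupp.indicator W fun _ _ => 1

variable {e : V' ↪ V} {W : Finset V} {h : V' →₀ ℕ}

theorem extendByOnes_apply_self (heW : ∀ x, e x ∉ W) (x : V') :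
    extendByOnes e W h (e x) = h x := by
  classical
  simp [extendByOnes, Finsupp.indicator_apply, heW]

theorem extendByOnes_apply_of_mem (heW : ∀ x, e x ∉ W) {w : V} (hw : w ∈ W) :
    extendByOnes e W h w = 1 := by
  classical
  have hwe : w ∉ Set.range e := by rintro ⟨x, rfl⟩; exact heW x hw
  simp [extendByOnes, Finsupp.indicator_apply, hw, Finsupp.embDomain_of_notMem_range _ _ _ hwe]

theorem extendByOnes_apply_of_notMem {v : V} (hv : v ∉ Set.range e) (hw : v ∉ W) :
    extendByOnes e W h v = 0 := by
  classical
  simp [extendByOnes, Finsupp.indicator_apply, hw, Finsupp.embDomain_of_notMem_range _ _ _ hv]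

theorem mem_stanleyCone_comapDomain_of_extendByOnes_mem (heW : ∀ x, e x ∉ W) {u : V →₀ ℕ}
    {Z : Finset V} (hh : extendByOnes e W h ∈ stanleyCone u Z) :
    h ∈ stanleyCone (u.comapDomain e e.injective.injOn) (Z.preimage e e.injective.injOn) := by
  rw [mem_stanleyCone_iff] at hh ⊢
  intro x
  simpa [extendByOnes_apply_self heW] using hh (e x)

theorem extendByOnes_mem_stanleyCone (heW : ∀ x, e x ∉ W) {u : V →₀ ℕ} {Z : Finset V}
    (hsupp : ↑u.support ∪ ↑Z ⊆ Set.range e ∪ ↑W) {h₀ : V' →₀ ℕ}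
    (h₀Z : extendByOnes e W h₀ ∈ stanleyCone u Z)
    (hh : h ∈ stanleyCone (u.comapDomain e e.injective.injOn) (Z.preimage e e.injective.injOn)) :
    extendByOnes e W h ∈ stanleyCone u Z := by
  rw [mem_stanleyCone_iff] at hh h₀Z ⊢
  intro v
  by_cases hve : v ∈ Set.range e
  · obtain ⟨x, rfl⟩ := hve
    simpa [extendByOnes_apply_self heW] using hh x
  by_cases hvW : v ∈ W
  · simpa [extendByOnes_apply_of_mem heW hvW] using h₀Z v
  · have hv : v ∉ (↑u.support ∪ ↑Z : Set V) := fun hv => (hsupp hv).elim hve hvW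
    simp only [Set.mem_union, Finset.mem_coe, Finsupp.mem_support_iff, not_or, not_not] at hv
    simp [extendByOnes_apply_of_notMem hve hvW, hv]

structure IsIndepSeparator (e : G' ↪g G) (W : Finset V) : Prop where
  isIndepSet : G.IsIndepSet ↑W
  notMem : ∀ x, e x ∉ W
  not_adj : ∀ x, ∀ w ∈ W, ¬ G.Adj (e x) w
  exists_adj : ∀ v ∉ Set.range e, v ∉ W → ∃ w ∈ W, G.Adj v w

namespace IsIndepSeparator

variable {e : G' ↪g G} {W : Finset V}

theorem isIndepSet_support_extendByOnes (hs : IsIndepSeparator e W)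
    (hh : G'.IsIndepSet ↑h.support) :
    G.IsIndepSet ↑(extendByOnes e.toEmbedding W h).support := by
  have hcases : ∀ v ∈ (extendByOnes e.toEmbedding W h).support,
      (∃ x ∈ h.support, e x = v) ∨ v ∈ W := by
    intro v hv
    by_cases hvW : v ∈ W
    · exact .inr hvW
    by_cases hve : v ∈ Set.range e
    · obtain ⟨x, rfl⟩ := hve
      refine .inl ⟨x, ?_, rfl⟩
      rw [Finsupp.mem_support_iff] at hv ⊢
      rwa [← extendByOnes_apply_self (e := e.toEmbedding) hs.notMem]
    · exact absurd (extendByOnes_apply_of_notMem hve hvW) (Finsupp.mem_support_iff.mp hv)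
  intro v hv w hw hvw hadj
  rcases hcases v hv with ⟨x, hx, rfl⟩ | hv <;> rcases hcases w hw with ⟨y, hy, rfl⟩ | hw
  · exact hh hx hy (fun hxy => hvw (congrArg e hxy)) (e.map_adj_iff.mp hadj)
  · exact hs.not_adj x w hw hadj
  · exact hs.not_adj y v hv hadj.symm
  · exact hs.isIndepSet hv hw hvw hadj

theorem support_union_subset (hs : IsIndepSeparator e W) {u : V →₀ ℕ} {Z : Finset V}
    (hD : G.IsIndepSet (↑u.support ∪ ↑Z)) {h₀ : V' →₀ ℕ}
    (h₀Z : extendByOnes e.toEmbedding W h₀ ∈ stanleyCone u Z) :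
    ↑u.support ∪ ↑Z ⊆ Set.range e ∪ ↑W := by
  have hWD : ∀ w ∈ W, w ∈ (↑u.support ∪ ↑Z : Set V) := by
    intro w hw
    have := mem_stanleyCone_iff.mp h₀Z w
    rw [extendByOnes_apply_of_mem hs.notMem hw] at this
    simp only [Set.mem_union, Finset.mem_coe, Finsupp.mem_support_iff]
    exact or_iff_not_imp_left.mpr fun hu => this.2 (by omega)
  intro v hv
  by_contra hvW
  simp only [Set.mem_union, not_or, Finset.mem_coe] at hvW
  obtain ⟨w, hw, hvw⟩ := hs.exists_adj v hvW.1 hvW.2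
  exact hD hv (hWD w hw) hvw.ne hvw

end IsIndepSeparator

theorem IsStanleyPartition.restrict {ι : Type*} {u : ι → V →₀ ℕ} {Z : ι → Finset V}
    (h : IsStanleyPartition G u Z) {e : G' ↪g G} {W : Finset V} (hs : IsIndepSeparator e W) :
    ∃ (P : ι → Prop) (u' : Subtype P → V' →₀ ℕ) (Z' : Subtype P → Finset V'),
      IsStanleyPartition G' u' Z' ∧ ∀ j : Subtype P, (Z j).card ≤ (Z' j).card + W.card := by
  classical
  let P (j : ι) : Prop := ∃ h₀, extendByOnes e.toEmbedding W h₀ ∈ stanleyCone (u j) (Z j)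
  have hsupp (j : Subtype P) : ↑(u j).support ∪ ↑(Z j) ⊆ Set.range e ∪ ↑W :=
    hs.support_union_subset (h.1 j) j.2.choose_spec
  refine ⟨P, fun j => (u j).comapDomain e e.injective.injOn,
    fun j => (Z j).preimage e e.injective.injOn, ⟨fun j => ?_, fun g hg => ?_⟩, fun j => ?_⟩
  · intro x hx y hy hxy hadj
    exact h.1 j (by simpa using hx) (by simpa using hy) (e.injective.ne hxy)
      (e.map_adj_iff.mpr hadj)
  · obtain ⟨j, hj, huniq⟩ := h.2 _ (hs.isIndepSet_support_extendByOnes hg)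
    refine ⟨⟨j, g, hj⟩, mem_stanleyCone_comapDomain_of_extendByOnes_mem hs.notMem hj,
      fun j' hj' => Subtype.ext (huniq j' ?_)⟩
    exact extendByOnes_mem_stanleyCone hs.notMem (hsupp j') j'.2.choose_spec hj'
  · have hZ : Z j ⊆ ((Z j).preimage e e.injective.injOn).map e.toEmbedding ∪ W := by
      intro v hv
      rcases hsupp j (Set.mem_union_right _ hv) with ⟨x, rfl⟩ | hvW
      · exact Finset.mem_union_left _ (Finset.mem_map_of_mem _ (by simpa using hv))
      · exact Finset.mem_union_right _ hvW
    calc (Z j).card ≤ _ := Finset.card_le_card hZ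
      _ ≤ _ := Finset.card_union_le _ _
      _ = _ := by rw [Finset.card_map]

theorem quotSdepth_edgeIdeal_le_card_add (K : Type) [Field K] [Fintype V'] {e : G' ↪g G}
    {W : Finset V} (hs : IsIndepSeparator e W) :
    quotSdepth K V (edgeIdeal K G) ≤ W.card + quotSdepth K V' (edgeIdeal K G') := by
  classical
  refine quotSdepth_edgeIdeal_le K fun d r u Z h hd => ?_
  obtain ⟨P, u', Z', h', hcard⟩ := h.restrict hs
  have := le_quotSdepth_edgeIdeal K h' (d := d - W.card) fun j => by
    have := hd j; have := hcard j; omega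
  omega

end Separator

section AryTree

variable {n k : ℕ}

theorem AryVert.ext {v w : AryVert n k} (h₁ : (v.1 : ℕ) = w.1) (h₂ : (v.2 : ℕ) = w.2) :
    v = w := by
  obtain ⟨⟨a, ha⟩, i⟩ := v
  obtain ⟨⟨b, hb⟩, j⟩ := w
  obtain rfl : a = b := h₁
  obtain rfl : i = j := Fin.ext h₂
  rfl

theorem AryVert.fst_lt (v : AryVert n k) : (v.1 : ℕ) < k + 1 := v.1.isLt

theorem aryTree_adj_levels {v w : AryVert n k} (h : (aryTree n k).Adj v w) :
    (v.1 : ℕ) + 1 = w.1 ∨ (w.1 : ℕ) + 1 = v.1 := by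
  rw [aryTree, SimpleGraph.fromRel_adj] at h
  omega

def aryLevel (n k : ℕ) (a : Fin (k + 1)) : Finset (AryVert n k) :=
  Finset.univ.map (Function.Embedding.sigmaMk a)

theorem mem_aryLevel {a : Fin (k + 1)} {v : AryVert n k} : v ∈ aryLevel n k a ↔ v.1 = a := by
  constructor
  · intro hv
    obtain ⟨i, -, rfl⟩ := Finset.mem_map.mp hv
    rfl
  · obtain ⟨b, i⟩ := v
    rintro rfl
    exact Finset.mem_map_of_mem _ (Finset.mem_univ i)

theorem card_aryLevel (a : Fin (k + 1)) : (aryLevel n k a).card = (n - 1) ^ (a : ℕ) := by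
  simp [aryLevel]

theorem isIndepSet_aryLevel (a : Fin (k + 1)) : (aryTree n k).IsIndepSet ↑(aryLevel n k a) := by
  intro v hv w hw _ hadj
  simp only [Finset.mem_coe, mem_aryLevel] at hv hw
  have := aryTree_adj_levels hadj
  rw [hv, hw] at this
  omega

theorem exists_adj_mem_aryLevel (hn : 2 ≤ n) {a : Fin (k + 1)} {v : AryVert n k}
    (hv : (v.1 : ℕ) + 1 = a ∨ (v.1 : ℕ) = a + 1) :
    ∃ w ∈ aryLevel n k a, (aryTree n k).Adj v w := by
  have hpos : 0 < n - 1 := by omega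
  have hvlt := v.2.isLt
  rcases hv with hv | hv
  · have hi : (v.2 : ℕ) * (n - 1) < (n - 1) ^ (a : ℕ) := by
      rw [← hv, pow_succ]
      exact Nat.mul_lt_mul_of_pos_right hvlt hpos
    refine ⟨⟨a, ⟨_, hi⟩⟩, mem_aryLevel.mpr rfl, ?_⟩
    rw [aryTree, SimpleGraph.fromRel_adj]
    exact ⟨fun h => by simp [h] at hv, .inl ⟨hv, (Nat.mul_div_cancel _ hpos).symm⟩⟩
  · have hi : (v.2 : ℕ) / (n - 1) < (n - 1) ^ (a : ℕ) := by
      rw [Nat.div_lt_iff_lt_mul hpos, ← pow_succ, ← hv]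
      exact hvlt
    refine ⟨⟨a, ⟨_, hi⟩⟩, mem_aryLevel.mpr rfl, ?_⟩
    rw [aryTree, SimpleGraph.fromRel_adj]
    exact ⟨fun h => by simp [h] at hv, .inr ⟨hv.symm, rfl⟩⟩

def AryVert.castLE {l : ℕ} (hkl : k ≤ l) : AryVert n k ↪ AryVert n l where
  toFun v := ⟨Fin.castLE (by omega) v.1, v.2⟩
  inj' v w h := AryVert.ext (congrArg (fun x : AryVert n l => (x.1 : ℕ)) h)
    (congrArg (fun x : AryVert n l => (x.2 : ℕ)) h)

def aryTreeEmbedding (n : ℕ) {k l : ℕ} (hkl : k ≤ l) : aryTree n k ↪g aryTree n l where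
  toEmbedding := AryVert.castLE hkl
  map_rel_iff' {v w} := by
    simp only [aryTree, SimpleGraph.fromRel_adj, (AryVert.castLE hkl).injective.ne_iff]
    rfl

theorem aryTreeEmbedding_fst {l : ℕ} (hkl : k ≤ l) (v : AryVert n k) :
    ((aryTreeEmbedding n hkl v).1 : ℕ) = v.1 := rfl

theorem mem_range_aryTreeEmbedding {l : ℕ} (hkl : k ≤ l) {v : AryVert n l} :
    v ∈ Set.range (aryTreeEmbedding n hkl) ↔ (v.1 : ℕ) ≤ k := by
  constructor
  · rintro ⟨x, rfl⟩
    exact Nat.lt_succ_iff.mp x.fst_lt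
  · intro hv
    exact ⟨⟨⟨v.1, by omega⟩, v.2⟩, AryVert.ext rfl rfl⟩

theorem quotSdepth_aryTree_two_le (K : Type) [Field K] (hn : 2 ≤ n) :
    quotSdepth K (AryVert n 2) (edgeIdeal K (aryTree n 2)) ≤ n - 1 := by
  have hs : IsIndepSeparator
      (RelEmbedding.ofIsEmpty (⊥ : SimpleGraph Empty).Adj (aryTree n 2).Adj) (aryLevel n 2 1) :=
    { isIndepSet := isIndepSet_aryLevel 1
      notMem := isEmptyElim
      not_adj := isEmptyElim
      exists_adj := fun v _ hv => exists_adj_mem_aryLevel hn <| by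
        rw [mem_aryLevel, Fin.ext_iff] at hv
        simp only [Fin.val_one] at hv ⊢
        omega }
  have hempty := quotSdepth_edgeIdeal_le_card K (G := (⊥ : SimpleGraph Empty))
  have := quotSdepth_edgeIdeal_le_card_add K hs
  rw [card_aryLevel, Fin.val_one, pow_one] at this
  rw [Fintype.card_empty, nonpos_iff_eq_zero] at hempty
  omega

theorem quotSdepth_aryTree_add_three_le (K : Type) [Field K] (hn : 2 ≤ n) (m : ℕ) :
    quotSdepth K (AryVert n (m + 3)) (edgeIdeal K (aryTree n (m + 3))) ≤
      (n - 1) ^ (m + 2) + quotSdepth K (AryVert n m) (edgeIdeal K (aryTree n m)) := by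
  set a : Fin (m + 3 + 1) := ⟨m + 2, by omega⟩
  have ha : (a : ℕ) = m + 2 := rfl
  have hs : IsIndepSeparator (aryTreeEmbedding n (by omega : m ≤ m + 3))
      (aryLevel n (m + 3) a) :=
    { isIndepSet := isIndepSet_aryLevel a
      notMem := fun x hx => by
        rw [mem_aryLevel, Fin.ext_iff, aryTreeEmbedding_fst] at hx
        have := x.fst_lt
        omega
      not_adj := fun x w hw hadj => by
        have := aryTree_adj_levels hadj
        rw [mem_aryLevel.mp hw, aryTreeEmbedding_fst] at this
        have := x.fst_lt
        omega
      exists_adj := fun v hv hvW => exists_adj_mem_aryLevel hn <| by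
        rw [mem_range_aryTreeEmbedding] at hv
        rw [mem_aryLevel, Fin.ext_iff] at hvW
        have := v.fst_lt
        omega }
  simpa [card_aryLevel] using quotSdepth_edgeIdeal_le_card_add K hs

end AryTree

theorem sdepth_aryTree_recursive (K : Type) [Field K] (n : ℕ) (hn : 3 ≤ n) :
    quotSdepth K (AryVert n 2) (edgeIdeal K (aryTree n 2)) ≤ n - 1 ∧
    ∀ k : ℕ, 3 ≤ k →
      quotSdepth K (AryVert n k) (edgeIdeal K (aryTree n k)) ≤
        (n - 1) ^ (k - 1) +
          quotSdepth K (AryVert n (k - 3)) (edgeIdeal K (aryTree n (k - 3))) := by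
  refine ⟨quotSdepth_aryTree_two_le K (by omega), fun k hk => ?_⟩
  obtain ⟨m, rfl⟩ : ∃ m, k = m + 3 := ⟨k - 3, by omega⟩
  exact quotSdepth_aryTree_add_three_le K (by omega) m
end

section
/- Let K be a field, let n ≥ 3 and k ≥ 1 be integers, and let R = K[V(T_{n,k})]. Then the Krull dimension of R/I(T_{n,k}) equals ((n−1)^{k+1} − 1)/(n − 2). -/
open MvPolynomial

/-- Level sizes of the perfect semiregular tree `T_{n,k}`. -/
def semiLevel (n : ℕ) : ℕ → ℕ
  | 0 => 1
  | a + 1 => n * (n - 1) ^ a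

/-- Vertices of the perfect semiregular tree `T_{n,k}`. -/
abbrev SemiVert (n k : ℕ) : Type := Σ a : Fin (k + 1), Fin (semiLevel n (a : ℕ))

/-- The perfect semiregular tree `T_{n,k}`: every internal (non-pendant) vertex has degree
`n` and every pendant vertex is at distance `k` from the root.  The vertex `j` at level
`a+1` is a child of vertex `j/(n-1)` at level `a` (of the root when `a = 0`). -/
def semiTree (n k : ℕ) : SimpleGraph (SemiVert n k) :=
  SimpleGraph.fromRel (fun v w =>
    (v.1 : ℕ) + 1 = (w.1 : ℕ) ∧ ((v.1 : ℕ) = 0 ∨ (v.2 : ℕ) = (w.2 : ℕ) / (n - 1)))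

/-!
The Krull dimension of `K[V] ⧸ I(G)` is the independence number of `G`. If `p ⊇ I(G)` is prime,
then `{v | X v ∉ p}` is independent and `p` contains all other variables, so every chain of primes
starting at `p` is a chain in `K[V] ⧸ (X v | X v ∈ p)`, a quotient of the polynomial ring on that
independent set. Conversely, killing the variables outside a maximum independent set maps
`K[V] ⧸ I(G)` onto the polynomial ring on it.

In `T_{n,k}` the vertices whose level has the parity of `k` form an independent set, and replacing
each other vertex of an independent set by its first child injects that set into this one. Level
`a + 1` has `n (n-1)^a = (n-1)^a + (n-1)^(a+1)` vertices, so the levels of the parity of `k`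
together have `1 + (n-1) + ⋯ + (n-1)^k` vertices.
-/

open Finset

theorem ringKrullDim_quotient_le_of_forall_isPrime {R : Type*} [CommRing R] {I : Ideal R}
    {d : WithBot ℕ∞}
    (h : ∀ p : Ideal R, p.IsPrime → I ≤ p → ∃ J ≤ p, ringKrullDim (R ⧸ J) ≤ d) :
    ringKrullDim (R ⧸ I) ≤ d := by
  rw [ringKrullDim_quotient, Order.krullDim]
  refine iSup_le fun l => ?_
  obtain ⟨J, hJ, hdim⟩ := h _ l.head.1.isPrime ((PrimeSpectrum.mem_zeroLocus _ _).mp l.head.2)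
  let l' : LTSeries (PrimeSpectrum.zeroLocus (R := R) J) :=
    { length := l.length
      toFun i := ⟨(l i).1, (PrimeSpectrum.mem_zeroLocus _ _).mpr (hJ.trans (l.head_le i))⟩
      step := l.step }
  calc (l.length : WithBot ℕ∞) = l'.length := rfl
    _ ≤ ringKrullDim (R ⧸ J) := ringKrullDim_quotient J ▸ Order.LTSeries.length_le_krullDim l'
    _ ≤ d := hdim

namespace MvPolynomial

variable {K σ τ : Type*}

theorem killCompl_X_of_notMem_range [CommSemiring K] {f : σ → τ} (hf : Function.Injective f)
    {v : τ} (hv : v ∉ Set.range f) : killCompl (R := K) hf (X v) = 0 := by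
  simp [killCompl, hv]

variable [Field K] [Finite σ]

theorem ringKrullDim_eq_natCard : ringKrullDim (MvPolynomial σ K) = Nat.card σ := by
  simp [ringKrullDim_eq_zero_of_field]

theorem ringKrullDim_quotient_span_X_compl_le (s : Set σ) :
    ringKrullDim (MvPolynomial σ K ⧸ Ideal.span (X '' sᶜ : Set (MvPolynomial σ K))) ≤
      Nat.card s := by
  set J := Ideal.span (X '' sᶜ : Set (MvPolynomial σ K))
  set f := (Ideal.Quotient.mkₐ K J).comp (rename (Subtype.val : s → σ))
  have hf : f.comp (killCompl Subtype.val_injective) = Ideal.Quotient.mkₐ K J := by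
    refine algHom_ext fun v => ?_
    by_cases hv : v ∈ s
    · lift v to s using hv
      rw [AlgHom.comp_apply, ← rename_X, killCompl_rename_app]
      rfl
    · rw [AlgHom.comp_apply, killCompl_X_of_notMem_range _ (by simpa using hv), map_zero,
        Ideal.Quotient.mkₐ_eq_mk, eq_comm, Ideal.Quotient.eq_zero_iff_mem]
      exact Ideal.subset_span ⟨v, hv, rfl⟩
  have hsurj : Function.Surjective f := fun x => by
    obtain ⟨p, rfl⟩ := Ideal.Quotient.mkₐ_surjective K J x
    exact ⟨_, AlgHom.congr_fun hf p⟩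
  rw [← ringKrullDim_eq_natCard (K := K)]
  exact ringKrullDim_le_of_surjective f.toRingHom hsurj

end MvPolynomial

namespace SimpleGraph

variable {K V : Type} [Field K] {G : SimpleGraph V}

theorem edgeIdeal_le_iff {I : Ideal (MvPolynomial V K)} :
    edgeIdeal K G ≤ I ↔ ∀ v w, G.Adj v w → X v * X w ∈ I := by
  simp only [edgeIdeal, Ideal.span_le, Set.ofPred_subset, SetLike.mem_coe]
  exact ⟨fun h v w hvw => h _ ⟨v, w, hvw, rfl⟩,
    fun h _ ⟨v, w, hvw, hx⟩ => hx ▸ h v w hvw⟩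

theorem isIndepSet_setOf_X_notMem {p : Ideal (MvPolynomial V K)} [p.IsPrime]
    (hp : edgeIdeal K G ≤ p) : G.IsIndepSet {v | X v ∉ p} := fun v hv w hw _ hvw => by
  rcases Ideal.IsPrime.mem_or_mem ‹_› (edgeIdeal_le_iff.mp hp v w hvw) with h | h
  exacts [hv h, hw h]

theorem edgeIdeal_le_ker_killCompl {s : Set V} (hs : G.IsIndepSet s) :
    edgeIdeal K G ≤
      RingHom.ker (killCompl (R := K) (Subtype.val_injective (p := (· ∈ s)))) := by
  refine edgeIdeal_le_iff.mpr fun v w hvw => ?_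
  have : v ∉ s ∨ w ∉ s := by
    by_contra! h
    exact hs h.1 h.2 hvw.ne hvw
  rw [RingHom.mem_ker, map_mul]
  rcases this with h | h
  · exact mul_eq_zero_of_left (killCompl_X_of_notMem_range _ (by simpa using h)) _
  · exact mul_eq_zero_of_right _ (killCompl_X_of_notMem_range _ (by simpa using h))

variable [Finite V]

theorem indepNum_le_ringKrullDim_quotient_edgeIdeal :
    (G.indepNum : WithBot ℕ∞) ≤ ringKrullDim (MvPolynomial V K ⧸ edgeIdeal K G) := by
  obtain ⟨s, hs, hcard⟩ := G.exists_isNIndepSet_indepNum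
  let f := Ideal.Quotient.lift _ _ (edgeIdeal_le_ker_killCompl (K := K) hs)
  have hf : Function.Surjective f := fun q =>
    ⟨Ideal.Quotient.mk _ (rename Subtype.val q), by simp [f]⟩
  calc (G.indepNum : WithBot ℕ∞) = ringKrullDim (MvPolynomial (s : Set V) K) := by
        rw [MvPolynomial.ringKrullDim_eq_natCard, Nat.card_coe_set_eq, Set.ncard_coe_finset,
          hcard]
    _ ≤ _ := ringKrullDim_le_of_surjective f hf

theorem ringKrullDim_quotient_edgeIdeal_le_indepNum :
    ringKrullDim (MvPolynomial V K ⧸ edgeIdeal K G) ≤ G.indepNum := by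
  refine ringKrullDim_quotient_le_of_forall_isPrime fun p _ hp => ?_
  refine ⟨_, ?_, (ringKrullDim_quotient_span_X_compl_le {v | X v ∉ p}).trans ?_⟩
  · rw [Ideal.span_le]
    rintro _ ⟨v, hv, rfl⟩
    simpa using hv
  · rw [Nat.card_coe_set_eq, Set.ncard_eq_toFinset_card _ (Set.toFinite _)]
    exact_mod_cast IsIndepSet.card_le_indepNum (by simpa using isIndepSet_setOf_X_notMem hp)

theorem ringKrullDim_quotient_edgeIdeal :
    ringKrullDim (MvPolynomial V K ⧸ edgeIdeal K G) = G.indepNum :=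
  le_antisymm ringKrullDim_quotient_edgeIdeal_le_indepNum
    indepNum_le_ringKrullDim_quotient_edgeIdeal

end SimpleGraph

theorem mul_pred_lt_semiLevel_succ {n a j : ℕ} (hn : 2 ≤ n) (hj : j < semiLevel n a) :
    j * (n - 1) < semiLevel n (a + 1) := by
  cases a with
  | zero =>
    obtain rfl : j = 0 := by simpa [semiLevel] using hj
    simp only [zero_mul, semiLevel, pow_zero, mul_one]
    omega
  | succ b =>
    rw [semiLevel, pow_succ, ← mul_assoc]
    exact Nat.mul_lt_mul_of_pos_right hj (by omega)

namespace SemiVert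

variable {n k : ℕ}

theorem ext {v w : SemiVert n k} (h₁ : (v.1 : ℕ) = w.1) (h₂ : (v.2 : ℕ) = w.2) : v = w := by
  obtain ⟨a, i⟩ := v
  obtain ⟨b, j⟩ := w
  obtain rfl : a = b := Fin.ext h₁
  obtain rfl : i = j := Fin.ext h₂
  rfl

def child (hn : 2 ≤ n) (v : SemiVert n k) (hv : (v.1 : ℕ) < k) : SemiVert n k :=
  ⟨⟨v.1 + 1, by omega⟩, ⟨v.2 * (n - 1), mul_pred_lt_semiLevel_succ hn v.2.2⟩⟩

theorem child_injective (hn : 2 ≤ n) {v w : SemiVert n k} {hv : (v.1 : ℕ) < k}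
    {hw : (w.1 : ℕ) < k} (h : child hn v hv = child hn w hw) : v = w := by
  have h₁ := congr_arg (fun u : SemiVert n k => (u.1 : ℕ)) h
  have h₂ := congr_arg (fun u : SemiVert n k => (u.2 : ℕ)) h
  simp only [child, add_left_inj] at h₁ h₂
  exact SemiVert.ext h₁ (Nat.eq_of_mul_eq_mul_right (by omega) h₂)

theorem semiTree_adj_child (hn : 2 ≤ n) (v : SemiVert n k) (hv : (v.1 : ℕ) < k) :
    (semiTree n k).Adj v (child hn v hv) := by
  refine SimpleGraph.fromRel_adj _ _ _ |>.mpr ⟨fun h => ?_, Or.inl ⟨rfl, Or.inr ?_⟩⟩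
  · simpa [child] using congr_arg (fun u : SemiVert n k => (u.1 : ℕ)) h
  · simp [child, Nat.mul_div_cancel _ (show 0 < n - 1 by omega)]

end SemiVert

theorem semiTree_adj_level {n k : ℕ} {v w : SemiVert n k} (h : (semiTree n k).Adj v w) :
    (v.1 : ℕ) + 1 = w.1 ∨ (w.1 : ℕ) + 1 = v.1 := by
  rw [semiTree, SimpleGraph.fromRel_adj] at h
  exact h.2.imp And.left And.left

def leafParityVerts (n k : ℕ) : Finset (SemiVert n k) := {v | (v.1 : ℕ) % 2 = k % 2}

section LeafParity

variable {n k : ℕ}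

theorem isIndepSet_leafParityVerts : (semiTree n k).IsIndepSet (leafParityVerts n k) := by
  intro v hv w hw _ hvw
  simp only [leafParityVerts, coe_filter, mem_univ, true_and, Set.mem_ofPred_eq] at hv hw
  rcases semiTree_adj_level hvw with h | h <;> omega

theorem card_le_card_leafParityVerts (hn : 2 ≤ n) {t : Finset (SemiVert n k)}
    (ht : (semiTree n k).IsIndepSet t) : #t ≤ #(leafParityVerts n k) := by
  have hlt : ∀ v : SemiVert n k, (v.1 : ℕ) % 2 ≠ k % 2 → (v.1 : ℕ) < k := fun v hv => by
    have := v.1.isLt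
    omega
  let f (v : SemiVert n k) : SemiVert n k :=
    if hv : (v.1 : ℕ) % 2 = k % 2 then v else v.child hn (hlt v hv)
  refine card_le_card_of_injOn f (fun v _ => ?_) fun v hv w hw h => ?_
  · by_cases hv : (v.1 : ℕ) % 2 = k % 2
    · simp [f, hv, leafParityVerts]
    · simp only [leafParityVerts, coe_filter, mem_univ, true_and, SemiVert.child, hv,
        ↓reduceDIte, Set.mem_ofPred_eq, f]
      omega
  · simp only [f] at h
    split_ifs at h with hv' hw' hw'
    · exact h
    · subst h
      exact (ht hw hv (SemiVert.semiTree_adj_child hn w _).ne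
        (SemiVert.semiTree_adj_child hn w _)).elim
    · subst h
      exact (ht hv hw (SemiVert.semiTree_adj_child hn v _).ne
        (SemiVert.semiTree_adj_child hn v _)).elim
    · exact SemiVert.child_injective hn h

theorem indepNum_semiTree (hn : 2 ≤ n) : (semiTree n k).indepNum = #(leafParityVerts n k) := by
  obtain ⟨t, ht, hcard⟩ := (semiTree n k).exists_isNIndepSet_indepNum
  exact le_antisymm (hcard ▸ card_le_card_leafParityVerts hn ht)
    isIndepSet_leafParityVerts.card_le_indepNum

theorem sum_semiLevel_parity (m : ℕ) : ∀ k : ℕ,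
    ∑ a ∈ range (k + 1), (if a % 2 = k % 2 then semiLevel (m + 1) a else 0) =
      ∑ j ∈ range (k + 1), m ^ j
  | 0 => by simp [semiLevel]
  | 1 => by simp [sum_range_succ, semiLevel, add_comm]
  | k + 2 => by
    have hsame : ∀ a, (a % 2 = (k + 2) % 2) = (a % 2 = k % 2) := by simp [Nat.add_mod_right]
    simp only [hsame]
    rw [sum_range_succ, sum_range_succ, sum_semiLevel_parity m k, if_neg (by omega),
      if_pos (by omega), sum_range_succ _ (k + 2), sum_range_succ _ (k + 1), semiLevel,
      Nat.add_sub_cancel]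
    ring

theorem card_leafParityVerts (m : ℕ) :
    #(leafParityVerts (m + 1) k) = ∑ j ∈ range (k + 1), m ^ j := by
  rw [← sum_semiLevel_parity, ← Fin.sum_univ_eq_sum_range
    (fun a => if a % 2 = k % 2 then semiLevel (m + 1) a else 0), leafParityVerts, card_filter,
    Fintype.sum_sigma]
  refine sum_congr rfl fun a _ => ?_
  split_ifs <;> simp [*]

end LeafParity

theorem krullDim_semiTree_quotient_general (K : Type) [Field K] (n k : ℕ) (hn : 3 ≤ n) :
    ringKrullDim (MvPolynomial (SemiVert n k) K ⧸ edgeIdeal K (semiTree n k)) =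
      ((((n - 1) ^ (k + 1) - 1) / (n - 2) : ℕ) : WithBot (WithTop ℕ)) := by
  obtain ⟨m, rfl⟩ : ∃ m, n = m + 1 := ⟨n - 1, by omega⟩
  rw [SimpleGraph.ringKrullDim_quotient_edgeIdeal, indepNum_semiTree (by omega),
    card_leafParityVerts, Nat.geomSum_eq (by omega), Nat.add_sub_cancel,
    show m + 1 - 2 = m - 1 by omega]
  rfl

theorem krullDim_semiTree_quotient (K : Type) [Field K] (n k : ℕ) (hn : 3 ≤ n) (hk : 1 ≤ k) :
    ringKrullDim (MvPolynomial (SemiVert n k) K ⧸ edgeIdeal K (semiTree n k)) =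
      ((((n - 1) ^ (k + 1) - 1) / (n - 2) : ℕ) : WithBot (WithTop ℕ)) :=
  krullDim_semiTree_quotient_general K n k hn
end

section
/- Let n ≥ 3 and k ≥ 1 be integers. Then the induced matching number of the perfect (n−1)-ary tree T'_{n,k} equals ((n−1)^{k+2} − (n−1)^2)/((n−1)^3 − 1) if k ≡ 0 (mod 3); equals ((n−1)^{k+2} − 1)/((n−1)^3 − 1) if k ≡ 1 (mod 3); and equals ((n−1)^{k+2} − n + 1)/((n−1)^3 − 1) if k ≡ 2 (mod 3). -/
open MvPolynomial

/-- An induced matching in `G`: a set of edges of `G` such that any two distinct edges in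
it share no vertex and are joined by no edge of `G`. -/
def IsInducedMatching {V : Type} (G : SimpleGraph V) (M : Set (Sym2 V)) : Prop :=
  M ⊆ G.edgeSet ∧
  ∀ e ∈ M, ∀ f ∈ M, e ≠ f → ∀ v ∈ e, ∀ w ∈ f, v ≠ w ∧ ¬ G.Adj v w

/-- The induced matching number of a graph: the maximum size of an induced matching. -/
noncomputable def indMatchNum {V : Type} (G : SimpleGraph V) : ℕ :=
  sSup {d | ∃ M : Finset (Sym2 V), IsInducedMatching G (M : Set (Sym2 V)) ∧ M.card = d}

def aSeq (q : ℕ) : ℕ → ℕ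
  | 0 => 0
  | (k+1) => q * aSeq q k + (if k % 3 = 0 then 1 else 0)

def bSeq (q : ℕ) : ℕ → ℕ
  | 0 => 0
  | (k+1) => q * aSeq q k

def cSeq (q : ℕ) : ℕ → ℕ
  | 0 => 0
  | (k+1) => q * bSeq q k

lemma bSeq_le_aSeq (q k : ℕ) : bSeq q k ≤ aSeq q k := by
  cases k with
  | zero => simp [bSeq, aSeq]
  | succ k => simp [bSeq, aSeq]

lemma main_ineq (q : ℕ) (hq : 1 ≤ q) (k : ℕ) :
    1 + cSeq q k + (q - 1) * bSeq q k ≤ aSeq q (k+1) := by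
  obtain ⟨p, rfl⟩ : ∃ p, q = p + 1 := ⟨q - 1, by omega⟩
  match k with
  | 0 => simp [aSeq, bSeq, cSeq]
  | 1 => simp [aSeq, bSeq, cSeq]
  | (m+2) =>
    have h3 : m % 3 = 0 ∨ (m+1) % 3 = 0 ∨ (m+2) % 3 = 0 := by omega
    simp only [aSeq, bSeq, cSeq, Nat.add_sub_cancel]
    rcases (show m % 3 = 0 ∨ m % 3 = 1 ∨ m % 3 = 2 by omega) with h|h|h <;>
      · have h1 : (m+1) % 3 = (m % 3 + 1) % 3 := by omega
        have h2 : (m+2) % 3 = (m % 3 + 2) % 3 := by omega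
        rw [h1, h2, h]
        norm_num
        nlinarith [Nat.zero_le (aSeq (p+1) m)]

lemma aSeq_closed (q : ℕ) (k : ℕ) :
    ((q:ℚ)^3 - 1) * (aSeq q k : ℚ) =
      (q:ℚ)^(k+2) - (if k % 3 = 0 then (q:ℚ)^2 else if k % 3 = 1 then 1 else (q:ℚ)) := by
  induction k with
  | zero => simp [aSeq]
  | succ k ih =>
    have h1 : ((k+1) % 3) = (k % 3 + 1) % 3 := by omega
    rcases (show k % 3 = 0 ∨ k % 3 = 1 ∨ k % 3 = 2 by omega) with h|h|h <;>
      · rw [h] at ih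
        simp only [aSeq, h1, h]
        push_cast
        norm_num
        norm_num at ih
        linear_combination (q:ℚ) * ih

lemma sum_levels (q : ℕ) (k : ℕ) :
    ∑ d ∈ (Finset.range k).filter (fun d => d % 3 = (k-1) % 3), q^d = aSeq q k := by
  induction k with
  | zero => simp [aSeq]
  | succ k ih =>
    rcases Nat.eq_zero_or_pos k with rfl | hk
    · simp [aSeq, Finset.range_one, Finset.filter_singleton]
    · rw [Finset.sum_filter, Finset.sum_range_succ']
      have h0 : (if 0 % 3 = (k+1-1) % 3 then q^0 else 0) = (if k % 3 = 0 then 1 else 0) := by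
        rcases (show k % 3 = 0 ∨ k % 3 = 1 ∨ k % 3 = 2 by omega) with h|h|h <;> simp [h] <;> omega
      have h1 : ∀ d, (if (d+1) % 3 = (k+1-1) % 3 then q^(d+1) else 0)
          = q * (if d % 3 = (k-1) % 3 then q^d else 0) := by
        intro d
        have : (d+1) % 3 = k % 3 ↔ d % 3 = (k-1) % 3 := by omega
        by_cases hd : d % 3 = (k-1) % 3
        · rw [if_pos (by omega), if_pos hd, pow_succ, mul_comm]
        · rw [if_neg (by omega), if_neg hd, mul_zero]
      rw [h0, Finset.sum_congr rfl (fun d _ => h1 d), ← Finset.mul_sum, ← Finset.sum_filter, ih]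
      simp [aSeq]

namespace Ary

lemma vert_ext {n k : ℕ} {v w : AryVert n k} (h1 : (v.1 : ℕ) = (w.1 : ℕ))
    (h2 : (v.2 : ℕ) = (w.2 : ℕ)) : v = w := by
  rcases v with ⟨a, j⟩
  rcases w with ⟨b, j'⟩
  obtain rfl : a = b := Fin.ext h1
  obtain rfl : j = j' := Fin.ext h2
  rfl

def vroot (n k : ℕ) : AryVert n k := ⟨⟨0, Nat.succ_pos k⟩, ⟨0, Nat.one_pos⟩⟩

@[simp] lemma vroot_fst (n k : ℕ) : ((vroot n k).1 : ℕ) = 0 := rfl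
@[simp] lemma vroot_snd (n k : ℕ) : ((vroot n k).2 : ℕ) = 0 := rfl

lemma eq_vroot {n k : ℕ} {v : AryVert n k} (h : (v.1 : ℕ) = 0) : v = vroot n k := by
  rcases v with ⟨⟨a, ha⟩, j⟩
  simp only [] at h
  subst h
  have hj := j.isLt
  simp only [pow_zero] at hj
  exact vert_ext rfl (by simpa using Nat.lt_one_iff.mp hj)

lemma adj_iff {n k : ℕ} {v w : AryVert n k} :
    (aryTree n k).Adj v w ↔
      (((v.1:ℕ) + 1 = (w.1:ℕ) ∧ (v.2:ℕ) = (w.2:ℕ) / (n-1)) ∨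
       ((w.1:ℕ) + 1 = (v.1:ℕ) ∧ (w.2:ℕ) = (v.2:ℕ) / (n-1))) := by
  rw [aryTree, SimpleGraph.fromRel_adj]
  constructor
  · rintro ⟨-, h⟩; exact h
  · intro h
    refine ⟨?_, h⟩
    rintro rfl
    rcases h with ⟨h, -⟩ | ⟨h, -⟩ <;> omega

lemma adj_level {n k : ℕ} {v w : AryVert n k} (h : (aryTree n k).Adj v w) :
    (v.1:ℕ) + 1 = (w.1:ℕ) ∨ (w.1:ℕ) + 1 = (v.1:ℕ) := by
  rcases adj_iff.mp h with ⟨h, -⟩ | ⟨h, -⟩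
  · exact Or.inl h
  · exact Or.inr h

lemma adj_vroot {n k : ℕ} {v : AryVert n k} (h : (v.1:ℕ) = 1) :
    (aryTree n k).Adj (vroot n k) v := by
  rcases v with ⟨⟨a, ha⟩, j⟩
  simp only [] at h
  subst h
  have hlt : (j:ℕ) < n - 1 := by simpa using j.isLt
  exact adj_iff.mpr (Or.inl ⟨by simp, by simp [Nat.div_eq_of_lt hlt]⟩)

/-- positivity of `(n-1)^a` coming from existence of a vertex index -/
lemma pow_pos_of_lt {q a m : ℕ} (h : m < q ^ (a+1)) : 0 < q ^ a := by
  rcases Nat.eq_zero_or_pos q with rfl | hq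
  · simp at h
  · exact pow_pos hq a

def psi (n k : ℕ) (v : AryVert n (k+1)) : AryVert n k :=
  if h : (v.1 : ℕ) = 0 then vroot n k
  else ⟨⟨(v.1:ℕ) - 1, by omega⟩,
    ⟨(v.2:ℕ) % (n-1)^((v.1:ℕ)-1), Nat.mod_lt _ (by
      have hlt := v.2.isLt
      have : (v.1:ℕ) - 1 + 1 = (v.1:ℕ) := by omega
      exact pow_pos_of_lt (m := (v.2:ℕ)) (by rw [this]; exact hlt))⟩⟩

lemma psi_fst {n k : ℕ} (v : AryVert n (k+1)) : ((psi n k v).1 : ℕ) = (v.1:ℕ) - 1 := by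
  rw [psi]
  split <;> simp_all

lemma psi_snd {n k : ℕ} (v : AryVert n (k+1)) (h : 1 ≤ (v.1:ℕ)) :
    ((psi n k v).2 : ℕ) = (v.2:ℕ) % (n-1)^((v.1:ℕ)-1) := by
  rw [psi, dif_neg (by omega)]

/-- subtree index of a non-root vertex -/
def idx (n : ℕ) {k : ℕ} (v : AryVert n k) : ℕ := (v.2:ℕ) / (n-1)^((v.1:ℕ) - 1)

lemma idx_lt {n k : ℕ} {v : AryVert n k} (h : 1 ≤ (v.1:ℕ)) : idx n v < n - 1 := by
  have hlt := v.2.isLt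
  have he : (v.1:ℕ) - 1 + 1 = (v.1:ℕ) := by omega
  have hp : 0 < (n-1)^((v.1:ℕ)-1) := pow_pos_of_lt (m := (v.2:ℕ)) (by rw [he]; exact hlt)
  rw [idx, Nat.div_lt_iff_lt_mul hp]
  calc (v.2:ℕ) < (n-1)^(v.1:ℕ) := hlt
    _ = (n-1) * (n-1)^((v.1:ℕ)-1) := by rw [← pow_succ']; congr 1; omega


lemma mod_pow_div (q a j : ℕ) : j % q^(a+1) / q = (j / q) % q^a := by
  rw [pow_succ']
  exact Nat.mod_mul_right_div_self j q (q^a)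

lemma div_pow_div (q a j : ℕ) : j / q^(a+1) = j / q / q^a := by
  rw [pow_succ', ← Nat.div_div_eq_div_mul]

lemma idx_adj {n k : ℕ} {v w : AryVert n k} (h : (aryTree n k).Adj v w)
    (hv : 1 ≤ (v.1:ℕ)) (hw : 1 ≤ (w.1:ℕ)) : idx n v = idx n w := by
  have key : ∀ v w : AryVert n k, 1 ≤ (v.1:ℕ) →
      ((v.1:ℕ) + 1 = (w.1:ℕ) ∧ (v.2:ℕ) = (w.2:ℕ) / (n-1)) → idx n v = idx n w := by
    rintro v w hv ⟨h1, h2⟩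
    unfold idx
    have : (w.1:ℕ) - 1 = ((v.1:ℕ) - 1) + 1 := by omega
    rw [this, div_pow_div, ← h2]
  rcases adj_iff.mp h with h' | h'
  · exact key v w hv h'
  · exact (key w v hw h').symm

lemma adj_psi {n k : ℕ} {v w : AryVert n (k+1)} (hv : 1 ≤ (v.1:ℕ)) (hw : 1 ≤ (w.1:ℕ))
    (h : (aryTree n (k+1)).Adj v w) : (aryTree n k).Adj (psi n k v) (psi n k w) := by
  have key : ∀ v w : AryVert n (k+1), 1 ≤ (v.1:ℕ) → 1 ≤ (w.1:ℕ) →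
      ((v.1:ℕ) + 1 = (w.1:ℕ) ∧ (v.2:ℕ) = (w.2:ℕ) / (n-1)) →
      (((psi n k v).1:ℕ) + 1 = ((psi n k w).1:ℕ) ∧
        ((psi n k v).2:ℕ) = ((psi n k w).2:ℕ) / (n-1)) := by
    rintro v w hv hw ⟨h1, h2⟩
    constructor
    · rw [psi_fst, psi_fst]; omega
    · rw [psi_snd v hv, psi_snd w hw]
      have hw1 : (w.1:ℕ) - 1 = ((v.1:ℕ) - 1) + 1 := by omega
      rw [hw1, mod_pow_div, ← h2]
  rcases adj_iff.mp h with h' | h'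
  · exact adj_iff.mpr (Or.inl (key v w hv hw h'))
  · exact adj_iff.mpr (Or.inr (key w v hw hv h'))

lemma psi_adj {n k : ℕ} {v w : AryVert n (k+1)} (hv : 1 ≤ (v.1:ℕ)) (hw : 1 ≤ (w.1:ℕ))
    (hidx : idx n v = idx n w)
    (h : (aryTree n k).Adj (psi n k v) (psi n k w)) : (aryTree n (k+1)).Adj v w := by
  have key : ∀ v w : AryVert n (k+1), 1 ≤ (v.1:ℕ) → 1 ≤ (w.1:ℕ) → idx n v = idx n w →
      (((psi n k v).1:ℕ) + 1 = ((psi n k w).1:ℕ) ∧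
        ((psi n k v).2:ℕ) = ((psi n k w).2:ℕ) / (n-1)) →
      ((v.1:ℕ) + 1 = (w.1:ℕ) ∧ (v.2:ℕ) = (w.2:ℕ) / (n-1)) := by
    rintro v w hv hw hidx ⟨h1, h2⟩
    rw [psi_fst, psi_fst] at h1
    rw [psi_snd v hv, psi_snd w hw] at h2
    have hlev : (v.1:ℕ) + 1 = (w.1:ℕ) := by omega
    refine ⟨hlev, ?_⟩
    unfold idx at hidx
    have hw1 : (w.1:ℕ) - 1 = ((v.1:ℕ) - 1) + 1 := by omega
    rw [hw1, mod_pow_div] at h2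
    rw [hw1, div_pow_div] at hidx
    calc (v.2:ℕ) = (n-1)^((v.1:ℕ)-1) * ((v.2:ℕ) / (n-1)^((v.1:ℕ)-1)) +
        (v.2:ℕ) % (n-1)^((v.1:ℕ)-1) := (Nat.div_add_mod _ _).symm
      _ = (n-1)^((v.1:ℕ)-1) * ((w.2:ℕ) / (n-1) / (n-1)^((v.1:ℕ)-1)) +
          ((w.2:ℕ) / (n-1)) % (n-1)^((v.1:ℕ)-1) := by rw [hidx, h2]
      _ = (w.2:ℕ) / (n-1) := Nat.div_add_mod _ _
  rcases adj_iff.mp h with h' | h'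
  · exact adj_iff.mpr (Or.inl (key v w hv hw hidx h'))
  · exact adj_iff.mpr (Or.inr (key w v hw hv hidx.symm h'))

lemma psi_injOn {n k : ℕ} {v w : AryVert n (k+1)} (hv : 1 ≤ (v.1:ℕ)) (hw : 1 ≤ (w.1:ℕ))
    (hidx : idx n v = idx n w) (h : psi n k v = psi n k w) : v = w := by
  have h1 : ((psi n k v).1:ℕ) = ((psi n k w).1:ℕ) := by rw [h]
  have h2 : ((psi n k v).2:ℕ) = ((psi n k w).2:ℕ) := by rw [h]
  rw [psi_fst, psi_fst] at h1
  rw [psi_snd v hv, psi_snd w hw] at h2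
  have hlev : (v.1:ℕ) = (w.1:ℕ) := by omega
  refine vert_ext hlev ?_
  unfold idx at hidx
  have heq : (n-1)^((v.1:ℕ)-1) = (n-1)^((w.1:ℕ)-1) := by rw [hlev]
  rw [heq] at h2 hidx
  calc (v.2:ℕ) = (n-1)^((w.1:ℕ)-1) * ((v.2:ℕ) / (n-1)^((w.1:ℕ)-1)) +
      (v.2:ℕ) % (n-1)^((w.1:ℕ)-1) := (Nat.div_add_mod _ _).symm
    _ = (n-1)^((w.1:ℕ)-1) * ((w.2:ℕ) / (n-1)^((w.1:ℕ)-1)) +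
        (w.2:ℕ) % (n-1)^((w.1:ℕ)-1) := by rw [hidx, h2]
    _ = (w.2:ℕ) := Nat.div_add_mod _ _

lemma sym2_map_injOn {n k : ℕ} {i : ℕ} (e f : Sym2 (AryVert n (k+1)))
    (he : ∀ v ∈ e, 1 ≤ (v.1:ℕ) ∧ idx n v = i) (hf : ∀ v ∈ f, 1 ≤ (v.1:ℕ) ∧ idx n v = i)
    (h : Sym2.map (psi n k) e = Sym2.map (psi n k) f) : e = f := by
  induction e using Sym2.inductionOn with | hf x y =>
  induction f using Sym2.inductionOn with | hf a b =>
  rw [Sym2.map_pair_eq, Sym2.map_pair_eq, Sym2.eq_iff] at h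
  obtain ⟨hx1, hx2⟩ := he x (Sym2.mem_iff.mpr (Or.inl rfl))
  obtain ⟨hy1, hy2⟩ := he y (Sym2.mem_iff.mpr (Or.inr rfl))
  obtain ⟨ha1, ha2⟩ := hf a (Sym2.mem_iff.mpr (Or.inl rfl))
  obtain ⟨hb1, hb2⟩ := hf b (Sym2.mem_iff.mpr (Or.inr rfl))
  rcases h with ⟨h1, h2⟩ | ⟨h1, h2⟩
  · rw [psi_injOn hx1 ha1 (by omega) h1, psi_injOn hy1 hb1 (by omega) h2]
  · rw [psi_injOn hx1 hb1 (by omega) h1, psi_injOn hy1 ha1 (by omega) h2]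
    exact Sym2.eq_swap

lemma sub_matching {n k : ℕ} {M Ms : Finset (Sym2 (AryVert n (k+1)))} {i : ℕ}
    (hM : IsInducedMatching (aryTree n (k+1)) (M : Set (Sym2 (AryVert n (k+1)))))
    (hsub : Ms ⊆ M)
    (hin : ∀ e ∈ Ms, ∀ v ∈ e, 1 ≤ (v.1:ℕ) ∧ idx n v = i) :
    ∃ N : Finset (Sym2 (AryVert n k)),
      IsInducedMatching (aryTree n k) (N : Set (Sym2 (AryVert n k))) ∧ N.card = Ms.card ∧
      ∀ e' ∈ N, ∀ v' ∈ e', ∃ e ∈ Ms, ∃ v ∈ e, psi n k v = v' := by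
  refine ⟨Ms.image (Sym2.map (psi n k)), ⟨?_, ?_⟩, ?_, ?_⟩
  · -- edges
    intro e' he'
    rw [Finset.coe_image, Set.mem_image] at he'
    obtain ⟨e, he, rfl⟩ := he'
    rw [Finset.mem_coe] at he
    have key : ∀ e ∈ Ms, Sym2.map (psi n k) e ∈ (aryTree n k).edgeSet := by
      intro e he
      induction e using Sym2.inductionOn with | hf x y =>
      obtain ⟨hx1, -⟩ := hin _ he x (Sym2.mem_iff.mpr (Or.inl rfl))
      obtain ⟨hy1, -⟩ := hin _ he y (Sym2.mem_iff.mpr (Or.inr rfl))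
      have hadj : (aryTree n (k+1)).Adj x y :=
        (SimpleGraph.mem_edgeSet _).mp (hM.1 (Finset.mem_coe.mpr (hsub he)))
      rw [Sym2.map_pair_eq, SimpleGraph.mem_edgeSet]
      exact adj_psi hx1 hy1 hadj
    exact key e he
  · -- induced
    intro e' he' f' hf' hne v' hv' w' hw'
    rw [Finset.mem_coe, Finset.mem_image] at he' hf'
    obtain ⟨e, he, rfl⟩ := he'
    obtain ⟨f, hf, rfl⟩ := hf'
    obtain ⟨v, hv, rfl⟩ := Sym2.mem_map.mp hv'
    obtain ⟨w, hw, rfl⟩ := Sym2.mem_map.mp hw'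
    have hne' : e ≠ f := fun h => hne (by rw [h])
    obtain ⟨hv1, hv2⟩ := hin e he v hv
    obtain ⟨hw1, hw2⟩ := hin f hf w hw
    obtain ⟨hvw, hnadj⟩ := hM.2 e (Finset.mem_coe.mpr (hsub he)) f
      (Finset.mem_coe.mpr (hsub hf)) hne' v hv w hw
    constructor
    · intro h
      exact hvw (psi_injOn hv1 hw1 (by omega) h)
    · intro h
      exact hnadj (psi_adj hv1 hw1 (by omega) h)
  · exact Finset.card_image_of_injOn (fun e he f hf h =>
      sym2_map_injOn e f (hin e he) (hin f hf) h)
  · intro e' he' v' hv'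
    obtain ⟨e, he, rfl⟩ := Finset.mem_image.mp he'
    obtain ⟨v, hv, rfl⟩ := Sym2.mem_map.mp hv'
    exact ⟨e, he, v, hv, rfl⟩

/-- the subtree index of an edge : max of the subtree indices of its endpoints -/
def fE (n : ℕ) {k : ℕ} : Sym2 (AryVert n k) → ℕ :=
  Sym2.lift ⟨fun v w => max (idx n v) (idx n w), fun v w => max_comm _ _⟩

@[simp] lemma fE_mk {n k : ℕ} (x y : AryVert n k) :
    fE n s(x, y) = max (idx n x) (idx n y) := rfl

lemma edge_desc {n k : ℕ} {e : Sym2 (AryVert n k)} (he : e ∈ (aryTree n k).edgeSet)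
    (hroot : vroot n k ∉ e) :
    (∀ v ∈ e, 1 ≤ (v.1:ℕ) ∧ idx n v = fE n e) ∧ fE n e < n - 1 := by
  induction e using Sym2.inductionOn with | hf x y =>
  have hadj : (aryTree n k).Adj x y := (SimpleGraph.mem_edgeSet _).mp he
  have hx1 : 1 ≤ (x.1:ℕ) := by
    rcases Nat.eq_zero_or_pos (x.1:ℕ) with h0 | h
    · exact absurd (Sym2.mem_iff.mpr (Or.inl (eq_vroot h0).symm)) hroot
    · exact h
  have hy1 : 1 ≤ (y.1:ℕ) := by
    rcases Nat.eq_zero_or_pos (y.1:ℕ) with h0 | h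
    · exact absurd (Sym2.mem_iff.mpr (Or.inr (eq_vroot h0).symm)) hroot
    · exact h
  have hxy : idx n x = idx n y := idx_adj hadj hx1 hy1
  have hfe : fE n s(x,y) = idx n x := by rw [fE_mk, hxy, max_self]
  refine ⟨?_, by rw [hfe]; exact idx_lt hx1⟩
  intro v hv
  rcases Sym2.mem_iff.mp hv with rfl | rfl
  · exact ⟨hx1, hfe.symm⟩
  · exact ⟨hy1, by rw [hfe, hxy]⟩

lemma upper {n : ℕ} (hn : 3 ≤ n) : ∀ (k : ℕ) (M : Finset (Sym2 (AryVert n k))),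
    IsInducedMatching (aryTree n k) (M : Set (Sym2 (AryVert n k))) →
    (M.card ≤ aSeq (n-1) k ∧
     ((∀ e ∈ M, vroot n k ∉ e) → M.card ≤ bSeq (n-1) k) ∧
     ((∀ e ∈ M, ∀ v ∈ e, 2 ≤ (v.1:ℕ)) → M.card ≤ cSeq (n-1) k)) := by
  have hq : 1 ≤ n - 1 := by omega
  intro k
  induction k with
  | zero =>
    intro M hM
    have : M = ∅ := by
      rw [Finset.eq_empty_iff_forall_notMem]
      intro e he
      have hedge := hM.1 (Finset.mem_coe.mpr he)
      clear he
      induction e using Sym2.inductionOn with | hf x y =>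
      have hadj : (aryTree n 0).Adj x y := (SimpleGraph.mem_edgeSet _).mp hedge
      have h1 := x.1.isLt
      have h2 := y.1.isLt
      rcases adj_level hadj with h | h <;> omega
    simp [this, aSeq, bSeq, cSeq]
  | succ k IH =>
    intro M hM
    classical
    -- fiberwise decomposition bound
    have main : ∀ (Ms : Finset (Sym2 (AryVert n (k+1)))), Ms ⊆ M →
        (∀ e ∈ Ms, vroot n (k+1) ∉ e) →
        ∀ (g : ℕ → ℕ),
        (∀ i, i < n-1 → ∀ N : Finset (Sym2 (AryVert n k)),
          IsInducedMatching (aryTree n k) (N : Set (Sym2 (AryVert n k))) →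
          N.card = (Ms.filter (fun e => fE n e = i)).card →
          (∀ e' ∈ N, ∀ v' ∈ e', ∃ e ∈ Ms.filter (fun e => fE n e = i), ∃ v ∈ e, psi n k v = v') →
          N.card ≤ g i) →
        Ms.card ≤ ∑ i ∈ Finset.range (n-1), g i := by
      intro Ms hsub hroot g hg
      have hdesc : ∀ e ∈ Ms, (∀ v ∈ e, 1 ≤ (v.1:ℕ) ∧ idx n v = fE n e) ∧ fE n e < n - 1 :=
        fun e he => edge_desc (hM.1 (Finset.mem_coe.mpr (hsub he))) (hroot e he)
      rw [Finset.card_eq_sum_card_fiberwise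
        (f := fE n) (t := Finset.range (n-1))
        (fun e he => Finset.mem_range.mpr (hdesc e he).2)]
      refine Finset.sum_le_sum ?_
      intro i hi
      have hin : ∀ e ∈ Ms.filter (fun e => fE n e = i), ∀ v ∈ e, 1 ≤ (v.1:ℕ) ∧ idx n v = i := by
        intro e he v hv
        rw [Finset.mem_filter] at he
        obtain ⟨h1, h2⟩ := (hdesc e he.1).1 v hv
        exact ⟨h1, by rw [h2, he.2]⟩
      obtain ⟨N, hNind, hNcard, hNcov⟩ :=
        sub_matching hM ((Finset.filter_subset _ _).trans hsub) hin
      rw [← hNcard]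
      exact hg i (Finset.mem_range.mp hi) N hNind hNcard hNcov
    -- Claim B
    have claimB : (∀ e ∈ M, vroot n (k+1) ∉ e) → M.card ≤ bSeq (n-1) (k+1) := by
      intro hroot
      have := main M subset_rfl hroot (fun _ => aSeq (n-1) k) ?_
      · calc M.card ≤ ∑ _i ∈ Finset.range (n-1), aSeq (n-1) k := this
          _ = (n-1) * aSeq (n-1) k := by rw [Finset.sum_const, Finset.card_range, smul_eq_mul]
          _ = bSeq (n-1) (k+1) := rfl
      · intro i _ N hNind hNcard _
        exact (IH N hNind).1
    -- Claim C
    have claimC : (∀ e ∈ M, ∀ v ∈ e, 2 ≤ (v.1:ℕ)) → M.card ≤ cSeq (n-1) (k+1) := by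
      intro h2
      have hroot : ∀ e ∈ M, vroot n (k+1) ∉ e := by
        intro e he hmem
        have := h2 e he _ hmem
        simp [vroot] at this
      have := main M subset_rfl hroot (fun _ => bSeq (n-1) k) ?_
      · calc M.card ≤ ∑ _i ∈ Finset.range (n-1), bSeq (n-1) k := this
          _ = (n-1) * bSeq (n-1) k := by rw [Finset.sum_const, Finset.card_range, smul_eq_mul]
          _ = cSeq (n-1) (k+1) := rfl
      · intro i _ N hNind hNcard hNcov
        refine (IH N hNind).2.1 ?_
        intro e' he' hmem
        obtain ⟨e, he, v, hv, hpsi⟩ := hNcov e' he' _ hmem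
        have hlev : 2 ≤ (v.1:ℕ) := h2 e ((Finset.mem_filter.mp he).1) v hv
        have := psi_fst v
        rw [hpsi] at this
        simp only [vroot_fst] at this
        omega
    refine ⟨?_, claimB, claimC⟩
    -- Claim A
    by_cases hroot : ∀ e ∈ M, vroot n (k+1) ∉ e
    · exact le_trans (claimB hroot) (by
        have := bSeq_le_aSeq (n-1) (k+1)
        omega)
    · push_neg at hroot
      obtain ⟨e0, he0, hre0⟩ := hroot
      obtain ⟨v0, rfl⟩ := Sym2.mem_iff_exists.mp hre0
      have hadj0 : (aryTree n (k+1)).Adj (vroot n (k+1)) v0 :=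
        (SimpleGraph.mem_edgeSet _).mp (hM.1 (Finset.mem_coe.mpr he0))
      have hv0lev : (v0.1:ℕ) = 1 := by
        rcases adj_level hadj0 with h | h <;> simp only [vroot_fst] at h <;> omega
      set c := idx n v0 with hc_def
      have hc : c < n - 1 := idx_lt (by omega)
      set Ms := M.filter (fun e => vroot n (k+1) ∉ e) with hMs_def
      have hMr : M.filter (fun e => vroot n (k+1) ∈ e) = {s(vroot n (k+1), v0)} := by
        apply Finset.eq_singleton_iff_unique_mem.mpr
        refine ⟨Finset.mem_filter.mpr ⟨he0, Sym2.mem_mk_left _ _⟩, ?_⟩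
        intro e he
        rw [Finset.mem_filter] at he
        by_contra hne
        exact (hM.2 e (Finset.mem_coe.mpr he.1) _ (Finset.mem_coe.mpr he0) hne
          _ he.2 _ (Sym2.mem_mk_left _ _)).1 rfl
      have hcards : M.card = 1 + Ms.card := by
        rw [hMs_def]
        have := Finset.card_filter_add_card_filter_not
          (s := M) (p := fun e => vroot n (k+1) ∈ e)
        rw [hMr] at this
        simp only [Finset.card_singleton] at this
        omega
      -- all vertices covered by Ms have level ≥ 2
      have hlev2 : ∀ e ∈ Ms, ∀ v ∈ e, 2 ≤ (v.1:ℕ) := by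
        intro e he v hv
        rw [hMs_def, Finset.mem_filter] at he
        have h1 : 1 ≤ (v.1:ℕ) := by
          rcases Nat.eq_zero_or_pos (v.1:ℕ) with h0 | h
          · exact absurd ((eq_vroot h0) ▸ hv) he.2
          · exact h
        rcases Nat.lt_or_ge (v.1:ℕ) 2 with h | h
        · exfalso
          have hvlev : (v.1:ℕ) = 1 := by omega
          have hne : e ≠ s(vroot n (k+1), v0) := by
            intro heq
            exact he.2 (heq ▸ Sym2.mem_mk_left _ _)
          exact (hM.2 e (Finset.mem_coe.mpr he.1) _ (Finset.mem_coe.mpr he0) hne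
            v hv _ (Sym2.mem_mk_left _ _)).2 ((adj_vroot hvlev).symm)
        · exact h
      -- vertices covered by the fiber of c have level ≥ 3
      have hlev3 : ∀ e ∈ Ms.filter (fun e => fE n e = c), ∀ v ∈ e, 3 ≤ (v.1:ℕ) := by
        intro e he v hv
        rw [Finset.mem_filter] at he
        have h2 : 2 ≤ (v.1:ℕ) := hlev2 e he.1 v hv
        rcases Nat.lt_or_ge (v.1:ℕ) 3 with h | h
        · exfalso
          have hvlev : (v.1:ℕ) = 2 := by omega
          have hidxv : idx n v = c := by
            have hroot' : vroot n (k+1) ∉ e := by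
              have h' := he.1
              rw [hMs_def, Finset.mem_filter] at h'
              exact h'.2
            obtain ⟨hd, -⟩ := edge_desc (hM.1 (Finset.mem_coe.mpr
              ((Finset.filter_subset _ _) he.1))) hroot'
            rw [(hd v hv).2, he.2]
          have hv2 : idx n v = (v.2:ℕ) / (n-1) := by
            have hexp : (n-1)^((v.1:ℕ)-1) = (n-1)^1 := by rw [show (v.1:ℕ)-1 = 1 by omega]
            rw [idx, hexp, pow_one]
          have hv02 : idx n v0 = (v0.2:ℕ) := by
            have hexp : (n-1)^((v0.1:ℕ)-1) = (n-1)^0 := by rw [show (v0.1:ℕ)-1 = 0 by omega]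
            rw [idx, hexp, pow_zero, Nat.div_one]
          have hadjv : (aryTree n (k+1)).Adj v0 v := by
            refine adj_iff.mpr (Or.inl ⟨by omega, ?_⟩)
            have hvv0 : idx n v = idx n v0 := by rw [hidxv, hc_def]
            rw [← hv2, hvv0, hv02]
          have hne : e ≠ s(vroot n (k+1), v0) := by
            intro heq
            have := hlev2 e he.1 (vroot n (k+1)) (heq ▸ Sym2.mem_mk_left _ _)
            simp at this
          exact (hM.2 e (Finset.mem_coe.mpr ((Finset.filter_subset _ _) he.1)) _
            (Finset.mem_coe.mpr he0) hne v hv v0 (Sym2.mem_mk_right _ _)).2 hadjv.symm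
        · exact h
      have hbound := main Ms (Finset.filter_subset _ _)
        (fun e he => (Finset.mem_filter.mp he).2)
        (fun i => if i = c then cSeq (n-1) k else bSeq (n-1) k) ?_
      · have hsum : ∑ i ∈ Finset.range (n-1),
            (if i = c then cSeq (n-1) k else bSeq (n-1) k)
            = cSeq (n-1) k + (n-1-1) * bSeq (n-1) k := by
          have hterm : ∀ i ∈ Finset.range (n-1) \ {c},
              (if i = c then cSeq (n-1) k else bSeq (n-1) k) = bSeq (n-1) k := by
            intro i hi
            rw [if_neg (by simpa using (Finset.mem_sdiff.mp hi).2)]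
          rw [Finset.sum_eq_add_sum_sdiff_singleton_of_mem (Finset.mem_range.mpr hc)
              (fun i => if i = c then cSeq (n-1) k else bSeq (n-1) k),
            Finset.sum_congr rfl hterm, Finset.sum_const, smul_eq_mul,
            Finset.card_sdiff_of_subset (by simpa using Finset.mem_range.mpr hc), Finset.card_range,
            Finset.card_singleton]
          simp
        rw [hsum] at hbound
        have := main_ineq (n-1) hq k
        omega
      · intro i hi N hNind hNcard hNcov
        by_cases hic : i = c
        · subst hic
          simp only [eq_self_iff_true, if_true]
          refine (IH N hNind).2.2 ?_
          intro e' he' v' hv'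
          obtain ⟨e, he, v, hv, hpsi⟩ := hNcov e' he' _ hv'
          have h3 := hlev3 e he v hv
          have := psi_fst v
          rw [hpsi] at this
          omega
        · simp only [if_neg hic]
          refine (IH N hNind).2.1 ?_
          intro e' he' hmem
          obtain ⟨e, he, v, hv, hpsi⟩ := hNcov e' he' _ hmem
          have h2 := hlev2 e ((Finset.mem_filter.mp he).1) v hv
          have := psi_fst v
          rw [hpsi] at this
          simp only [vroot_fst] at this
          omega

lemma I_ext {n : ℕ} {x y : Σ d : ℕ, Fin ((n-1)^d)} (h1 : x.1 = y.1)
    (h2 : (x.2:ℕ) = (y.2:ℕ)) : x = y := by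
  rcases x with ⟨a, j⟩
  rcases y with ⟨b, j'⟩
  obtain rfl : a = b := h1
  obtain rfl : j = j' := Fin.ext h2
  rfl

/-- the matching edge associated to a vertex index: vertex `(d, j)` matched to its
child `(d+1, j*(n-1))`. -/
def emb (n k : ℕ) (hn : 3 ≤ n) (x : Σ d : ℕ, Fin ((n-1)^d)) : Sym2 (AryVert n k) :=
  if h : x.1 < k then
    s(⟨⟨x.1, by omega⟩, x.2⟩,
      ⟨⟨x.1 + 1, by omega⟩, ⟨(x.2:ℕ) * (n-1), by
        have hq : 0 < n - 1 := by omega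
        calc (x.2:ℕ) * (n-1) < (n-1)^x.1 * (n-1) :=
              (Nat.mul_lt_mul_right hq).mpr x.2.isLt
          _ = (n-1)^(x.1+1) := (pow_succ _ _).symm⟩⟩)
  else s(vroot n k, vroot n k)

lemma lower {n : ℕ} (hn : 3 ≤ n) (k : ℕ) :
    ∃ M : Finset (Sym2 (AryVert n k)),
      IsInducedMatching (aryTree n k) (M : Set (Sym2 (AryVert n k))) ∧
      M.card = aSeq (n-1) k := by
  classical
  have hq : 0 < n - 1 := by omega
  set D := (Finset.range k).filter (fun d => d % 3 = (k-1) % 3) with hD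
  set S : Finset (Σ d : ℕ, Fin ((n-1)^d)) := D.sigma (fun d => Finset.univ) with hS
  have hmemS : ∀ x ∈ S, x.1 < k ∧ x.1 % 3 = (k-1) % 3 := by
    intro x hx
    rw [hS, Finset.mem_sigma, hD, Finset.mem_filter, Finset.mem_range] at hx
    exact ⟨hx.1.1, hx.1.2⟩
  refine ⟨S.image (emb n k hn), ⟨?_, ?_⟩, ?_⟩
  · -- edges
    intro e he
    rw [Finset.coe_image, Set.mem_image] at he
    obtain ⟨x, hx, rfl⟩ := he
    rw [Finset.mem_coe] at hx
    obtain ⟨hxk, -⟩ := hmemS x hx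
    rw [emb, dif_pos hxk, SimpleGraph.mem_edgeSet]
    refine adj_iff.mpr (Or.inl ⟨rfl, ?_⟩)
    exact (Nat.mul_div_cancel x.2.val hq).symm
  · -- induced
    intro e he f hf hne v hv w hw
    rw [Finset.mem_coe, Finset.mem_image] at he hf
    obtain ⟨x, hx, rfl⟩ := he
    obtain ⟨y, hy, rfl⟩ := hf
    obtain ⟨hxk, hxm⟩ := hmemS x hx
    obtain ⟨hyk, hym⟩ := hmemS y hy
    rw [emb, dif_pos hxk] at hv hne
    rw [emb, dif_pos hyk] at hw hne
    -- value description of the four vertices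
    have hne2 : ¬(x.1 = y.1 ∧ (x.2:ℕ) = (y.2:ℕ)) := by
      rintro ⟨h1, h2⟩
      obtain rfl := I_ext h1 h2
      exact hne rfl
    rcases Sym2.mem_iff.mp hv with rfl | rfl <;> rcases Sym2.mem_iff.mp hw with rfl | rfl <;>
      constructor
    · -- u1 ≠ w1
      intro heq
      have l1 : x.1 = y.1 := congrArg (fun v : AryVert n k => (v.1:ℕ)) heq
      have l2 : (x.2:ℕ) = (y.2:ℕ) := congrArg (fun v : AryVert n k => (v.2:ℕ)) heq
      exact hne2 ⟨l1, l2⟩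
    · -- ¬ Adj u1 w1
      intro hadj
      rcases adj_iff.mp hadj with ⟨h1, h2⟩ | ⟨h1, h2⟩ <;>
      · simp only [] at h1 h2
        by_cases hl : x.1 = y.1
        · omega
        · omega
    · -- u1 ≠ w2
      intro heq
      have l1 : x.1 = y.1 + 1 := congrArg (fun v : AryVert n k => (v.1:ℕ)) heq
      have l2 : (x.2:ℕ) = (y.2:ℕ) * (n-1) := congrArg (fun v : AryVert n k => (v.2:ℕ)) heq
      omega
    · intro hadj
      rcases adj_iff.mp hadj with ⟨h1, h2⟩ | ⟨h1, h2⟩ <;> simp only [] at h1 h2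
      · -- x.1 + 1 = y.1 + 1 and x.2 = (y.2 * q)/q
        have : (x.2:ℕ) = (y.2:ℕ) := by rw [h2, Nat.mul_div_cancel _ hq]
        exact hne2 ⟨by omega, this⟩
      · omega
    · -- u2 ≠ w1
      intro heq
      have l1 : x.1 + 1 = y.1 := congrArg (fun v : AryVert n k => (v.1:ℕ)) heq
      omega
    · intro hadj
      rcases adj_iff.mp hadj with ⟨h1, h2⟩ | ⟨h1, h2⟩ <;> simp only [] at h1 h2
      · omega
      · have : (y.2:ℕ) = (x.2:ℕ) := by rw [h2, Nat.mul_div_cancel _ hq]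
        exact hne2 ⟨by omega, this.symm⟩
    · -- u2 ≠ w2
      intro heq
      have l1 : x.1 + 1 = y.1 + 1 := congrArg (fun v : AryVert n k => (v.1:ℕ)) heq
      have l2 : (x.2:ℕ) * (n-1) = (y.2:ℕ) * (n-1) :=
        congrArg (fun v : AryVert n k => (v.2:ℕ)) heq
      have : (x.2:ℕ) = (y.2:ℕ) := Nat.eq_of_mul_eq_mul_right hq l2
      exact hne2 ⟨by omega, this⟩
    · intro hadj
      rcases adj_iff.mp hadj with ⟨h1, h2⟩ | ⟨h1, h2⟩ <;> simp only [] at h1 h2 <;> omega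
  · -- cardinality
    rw [Finset.card_image_of_injOn, hS, Finset.card_sigma]
    · simp only [Finset.card_univ, Fintype.card_fin]
      rw [hD]
      exact sum_levels (n-1) k
    · intro x hx y hy h
      rw [Finset.mem_coe] at hx hy
      obtain ⟨hxk, -⟩ := hmemS x hx
      obtain ⟨hyk, -⟩ := hmemS y hy
      rw [emb, dif_pos hxk, emb, dif_pos hyk, Sym2.eq_iff] at h
      rcases h with ⟨h1, h2⟩ | ⟨h1, h2⟩
      · refine I_ext ?_ ?_
        · exact congrArg (fun v : AryVert n k => (v.1:ℕ)) h1
        · exact congrArg (fun v : AryVert n k => (v.2:ℕ)) h1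
      · have l1 : x.1 = y.1 + 1 := congrArg (fun v : AryVert n k => (v.1:ℕ)) h1
        have l2 : x.1 + 1 = y.1 := congrArg (fun v : AryVert n k => (v.1:ℕ)) h2
        omega

lemma value {n k : ℕ} (hn : 3 ≤ n) : indMatchNum (aryTree n k) = aSeq (n-1) k := by
  have hub : ∀ d ∈ {d | ∃ M : Finset (Sym2 (AryVert n k)),
      IsInducedMatching (aryTree n k) (M : Set (Sym2 (AryVert n k))) ∧ M.card = d},
      d ≤ aSeq (n-1) k := by
    rintro d ⟨M, hM, rfl⟩
    exact (upper hn k M hM).1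
  obtain ⟨M0, hM0, hcard⟩ := lower hn k
  rw [indMatchNum]
  apply le_antisymm
  · exact csSup_le ⟨aSeq (n-1) k, M0, hM0, hcard⟩ hub
  · exact le_csSup ⟨aSeq (n-1) k, hub⟩ ⟨M0, hM0, hcard⟩

end Ary


theorem indMatchNum_aryTree (n k : ℕ) (hn : 3 ≤ n) (hk : 1 ≤ k) :
    (k % 3 = 0 →
      (indMatchNum (aryTree n k) : ℚ) =
        (((n : ℚ) - 1) ^ (k + 2) - ((n : ℚ) - 1) ^ 2) / (((n : ℚ) - 1) ^ 3 - 1)) ∧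
    (k % 3 = 1 →
      (indMatchNum (aryTree n k) : ℚ) =
        (((n : ℚ) - 1) ^ (k + 2) - 1) / (((n : ℚ) - 1) ^ 3 - 1)) ∧
    (k % 3 = 2 →
      (indMatchNum (aryTree n k) : ℚ) =
        (((n : ℚ) - 1) ^ (k + 2) - (n : ℚ) + 1) / (((n : ℚ) - 1) ^ 3 - 1)) := by
  have hcast : ((n - 1 : ℕ) : ℚ) = (n:ℚ) - 1 := by
    push_cast [Nat.cast_sub (by omega : 1 ≤ n)]
    ring
  have h2q : (2:ℚ) ≤ ((n - 1 : ℕ) : ℚ) := by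
    exact_mod_cast (by omega : 2 ≤ n - 1)
  have hne : ((n:ℚ) - 1)^3 - 1 ≠ 0 := by
    rw [← hcast]
    have h8 : (8:ℚ) ≤ ((n - 1 : ℕ) : ℚ)^3 := by nlinarith [h2q, sq_nonneg ((n-1:ℕ):ℚ)]
    intro heq
    linarith
  have hclosed := aSeq_closed (n-1) k
  rw [Ary.value hn]
  refine ⟨fun h => ?_, fun h => ?_, fun h => ?_⟩ <;> rw [h] at hclosed <;>
      norm_num at hclosed <;> rw [eq_div_iff hne, ← hcast]
  · linear_combination hclosed
  · linear_combination hclosed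
  · linear_combination hclosed - hcast
end

section
/- Let n ≥ 3 and k ≥ 1 be integers. Then the induced matching number of the perfect semiregular tree T_{n,k} equals (n(n−1)^{k+1} − n(n−1))/((n−1)^3 − 1) if k ≡ 0 (mod 3); equals (n(n−1)^{k+1} − (n−1)^2 − 1)/((n−1)^3 − 1) if k ≡ 1 (mod 3); and equals (n(n−1)^{k+1} − n)/((n−1)^3 − 1) if k ≡ 2 (mod 3). -/
open MvPolynomial

/-!
Write `L_b` for level `b` of the tree and call the level of the upper endpoint of an edge its
level. In an induced matching, send an edge at level `b`, `b - 1` or `b - 2` to a vertex at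
level `b`: its upper end, its lower end, or a child of its lower end. Because parents are unique,
distinct edges of an induced matching are sent to distinct vertices, so at most `|L_b|` of its
edges have level in `[b - 2, b]`. Cutting the levels `0, …, k - 1` into such windows ending at
`k - 1, k - 4, …` bounds the matching by `|L_{k-1}| + |L_{k-4}| + ⋯`, and matching every vertex
of these levels to one of its children attains the bound. Finally `S K = |L_{K-1}| + |L_{K-4}| + ⋯`
satisfies `S (K + 3) = S K + n (n - 1)^(K + 1)`, so `S K ((n - 1)^3 - 1) - n (n - 1)^(K + 1)`
depends only on `K % 3`, which gives the three closed forms.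
-/

open Finset

/-- `(K + 2) % 3` stands for `(K - 1) % 3` without truncated subtraction. -/
def everyThirdLevelSum (n K : ℕ) : ℕ :=
  ∑ a ∈ range K with a % 3 = (K + 2) % 3, semiLevel n a

lemma everyThirdLevelSum_succ (n K : ℕ) :
    everyThirdLevelSum n (K + 1) = everyThirdLevelSum n (K - 2) + semiLevel n K := by
  have hlevels : {a ∈ range (K + 1) | a % 3 = (K + 1 + 2) % 3}
      = insert K {a ∈ range (K - 2) | a % 3 = (K - 2 + 2) % 3} := by
    ext a
    simp only [mem_filter, mem_range, mem_insert]
    omega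
  rw [everyThirdLevelSum, hlevels, sum_insert (by simp), add_comm, everyThirdLevelSum]

lemma everyThirdLevelSum_add_three (n K : ℕ) :
    everyThirdLevelSum n (K + 3) = everyThirdLevelSum n K + semiLevel n (K + 2) := by
  rw [everyThirdLevelSum_succ]
  rfl

namespace SemiVert

variable {n k : ℕ}

lemma ext_val {u w : SemiVert n k} (h₁ : (u.1 : ℕ) = w.1) (h₂ : (u.2 : ℕ) = w.2) :
    u = w := by
  obtain ⟨⟨a, ha⟩, ⟨j, hj⟩⟩ := u
  obtain ⟨⟨b, hb⟩, ⟨i, hi⟩⟩ := w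
  dsimp only at h₁ h₂
  subst h₁ h₂
  rfl

lemma snd_eq_zero_of_fst_eq_zero {v : SemiVert n k} (h : (v.1 : ℕ) = 0) : (v.2 : ℕ) = 0 := by
  obtain ⟨⟨a, ha⟩, j, hj⟩ := v
  dsimp only at h ⊢
  subst h
  simp only [semiLevel] at hj
  omega

def IsChild (v w : SemiVert n k) : Prop :=
  (v.1 : ℕ) + 1 = w.1 ∧ ((v.1 : ℕ) = 0 ∨ (v.2 : ℕ) = (w.2 : ℕ) / (n - 1))

lemma IsChild.unique {v v' w : SemiVert n k} (h : IsChild v w) (h' : IsChild v' w) : v = v' := by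
  obtain ⟨hl, hv⟩ := h
  obtain ⟨hl', hv'⟩ := h'
  refine ext_val (by omega) ?_
  by_cases h₀ : (v.1 : ℕ) = 0
  · rw [snd_eq_zero_of_fst_eq_zero h₀, snd_eq_zero_of_fst_eq_zero (by omega)]
  · omega

lemma exists_isChild (hn : 2 ≤ n) {v : SemiVert n k} (hv : (v.1 : ℕ) < k) :
    ∃ w, IsChild v w := by
  have hlt : (v.2 : ℕ) * (n - 1) < semiLevel n (v.1 + 1) := by
    obtain ⟨⟨_ | a, _⟩, j, hj⟩ := v
    · simp only [semiLevel, pow_zero, mul_one] at hj ⊢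
      have : j = 0 := by omega
      subst this; omega
    · simp only [semiLevel, pow_succ, ← mul_assoc] at hj ⊢
      exact Nat.mul_lt_mul_of_pos_right hj (by omega)
  refine ⟨⟨⟨v.1 + 1, by omega⟩, ⟨v.2 * (n - 1), hlt⟩⟩, rfl, Or.inr ?_⟩
  simp [Nat.mul_div_cancel _ (show 0 < n - 1 by omega)]

end SemiVert

open SemiVert

variable {n k : ℕ}

lemma semiTree_adj_iff {v w : SemiVert n k} :
    (semiTree n k).Adj v w ↔ IsChild v w ∨ IsChild w v := by
  rw [semiTree, SimpleGraph.fromRel_adj]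
  refine ⟨And.right, fun h => ⟨?_, h⟩⟩
  rintro rfl
  rcases h with ⟨h, -⟩ | ⟨h, -⟩ <;> omega

lemma SemiVert.IsChild.adj {v w : SemiVert n k} (h : IsChild v w) : (semiTree n k).Adj v w :=
  semiTree_adj_iff.2 (Or.inl h)

lemma exists_isChild_of_mem_edgeSet {e : Sym2 (SemiVert n k)} (he : e ∈ (semiTree n k).edgeSet) :
    ∃ v w, IsChild v w ∧ e = s(v, w) := by
  induction e using Sym2.ind with
  | _ v w =>
    rcases semiTree_adj_iff.1 he with h | h
    · exact ⟨v, w, h, rfl⟩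
    · exact ⟨w, v, h, Sym2.eq_swap⟩

lemma card_filter_fst_mem (A : Finset ℕ) (hA : ∀ a ∈ A, a ≤ k) :
    #{v : SemiVert n k | (v.1 : ℕ) ∈ A} = ∑ a ∈ A, semiLevel n a := by
  have hsigma : ({v : SemiVert n k | (v.1 : ℕ) ∈ A} : Finset _)
      = ({i : Fin (k + 1) | (i : ℕ) ∈ A} : Finset _).sigma fun _ => univ := by
    ext ⟨i, j⟩
    simp
  rw [hsigma, card_sigma]
  simp only [card_univ, Fintype.card_fin]
  refine sum_nbij (↑) (fun i hi => (mem_filter.1 hi).2) (fun i _ j _ h => Fin.ext h)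
    (fun a ha => ⟨⟨a, Nat.lt_succ_of_le (hA a ha)⟩, by simpa using ha, rfl⟩) fun _ _ => rfl

def edgeLevel (e : Sym2 (SemiVert n k)) : ℕ :=
  Sym2.lift ⟨fun v w => min (v.1 : ℕ) w.1, fun _ _ => min_comm _ _⟩ e

lemma edgeLevel_mk {v w : SemiVert n k} (h : IsChild v w) : edgeLevel s(v, w) = v.1 := by
  simp only [edgeLevel, Sym2.lift_mk]
  have := h.1
  omega

def Touches (e : Sym2 (SemiVert n k)) (u : SemiVert n k) : Prop :=
  ∃ w ∈ e, w = u ∨ IsChild w u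

lemma IsInducedMatching.eq_of_touches {M : Set (Sym2 (SemiVert n k))}
    (hM : IsInducedMatching (semiTree n k) M) {e f : Sym2 (SemiVert n k)} (he : e ∈ M)
    (hf : f ∈ M) {u : SemiVert n k} (hue : Touches e u) (huf : Touches f u) : e = f := by
  by_contra hef
  obtain ⟨v, hv, hvu⟩ := hue
  obtain ⟨w, hw, hwu⟩ := huf
  rcases hvu with hvu | hvu <;> rcases hwu with hwu | hwu
  · exact (hM.2 e he f hf hef v hv w hw).1 (hvu.trans hwu.symm)
  · exact (hM.2 f hf e he (Ne.symm hef) w hw v hv).2 (hvu ▸ hwu.adj)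
  · exact (hM.2 e he f hf hef v hv w hw).2 (hwu ▸ hvu.adj)
  · exact (hM.2 e he f hf hef v hv w hw).1 (hvu.unique hwu)

lemma card_filter_edgeLevel_window_le (hn : 2 ≤ n) {M : Finset (Sym2 (SemiVert n k))}
    (hM : IsInducedMatching (semiTree n k) M) {b : ℕ} (hb : b ≤ k) :
    #{e ∈ M | b ≤ edgeLevel e + 2 ∧ edgeLevel e ≤ b} ≤ semiLevel n b := by
  calc _ ≤ #{u : SemiVert n k | (u.1 : ℕ) ∈ ({b} : Finset ℕ)} := by
        refine card_le_card_of_forall_subsingleton (r := Touches) ?_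
          fun u _ e₁ he₁ e₂ he₂ => hM.eq_of_touches (mem_filter.1 he₁.1).1
            (mem_filter.1 he₂.1).1 he₁.2 he₂.2
        intro e he
        obtain ⟨he, hwindow⟩ := mem_filter.1 he
        obtain ⟨v, w, hvw, rfl⟩ := exists_isChild_of_mem_edgeSet (hM.1 he)
        rw [edgeLevel_mk hvw] at hwindow
        have hw := hvw.1
        simp only [mem_filter, mem_univ, true_and, mem_singleton]
        obtain h | h | h : (v.1 : ℕ) = b ∨ (w.1 : ℕ) = b ∨ (w.1 : ℕ) + 1 = b := by omega
        · exact ⟨v, h, v, Sym2.mem_mk_left v w, Or.inl rfl⟩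
        · exact ⟨w, h, w, Sym2.mem_mk_right v w, Or.inl rfl⟩
        · obtain ⟨u, hwu⟩ := exists_isChild hn (v := w) (by omega)
          exact ⟨u, by have := hwu.1; omega, w, Sym2.mem_mk_right v w, Or.inr hwu⟩
    _ = semiLevel n b := by
        rw [card_filter_fst_mem _ (by simpa using hb), sum_singleton]

lemma card_filter_edgeLevel_lt_le (hn : 2 ≤ n) {M : Finset (Sym2 (SemiVert n k))}
    (hM : IsInducedMatching (semiTree n k) M) (K : ℕ) (hK : K ≤ k) :
    #{e ∈ M | edgeLevel e < K} ≤ everyThirdLevelSum n K := by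
  induction K using Nat.strong_induction_on with
  | _ K ih =>
  rcases K with _ | K
  · simp
  have hsplit : {e ∈ M | edgeLevel e < K + 1}
      = {e ∈ M | edgeLevel e < K - 2} ∪
        {e ∈ M | K ≤ edgeLevel e + 2 ∧ edgeLevel e ≤ K} := by
    ext e
    simp only [mem_filter, mem_union, ← and_or_left]
    exact and_congr_right fun _ => by omega
  rw [hsplit, everyThirdLevelSum_succ]
  exact (card_union_le _ _).trans <|
    add_le_add (ih _ (by omega) (by omega)) (card_filter_edgeLevel_window_le hn hM (by omega))

lemma card_le_everyThirdLevelSum (hn : 2 ≤ n) {M : Finset (Sym2 (SemiVert n k))}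
    (hM : IsInducedMatching (semiTree n k) M) : #M ≤ everyThirdLevelSum n k := by
  have hlt : ∀ e ∈ M, edgeLevel e < k := by
    intro e he
    obtain ⟨v, w, hvw, rfl⟩ := exists_isChild_of_mem_edgeSet (hM.1 he)
    rw [edgeLevel_mk hvw]
    have := hvw.1
    have := w.1.isLt
    omega
  simpa [filter_true_of_mem hlt] using card_filter_edgeLevel_lt_le hn hM k le_rfl

lemma eq_of_mem_mk_isChild {c : SemiVert n k → SemiVert n k} {v w x y : SemiVert n k}
    (hv : IsChild v (c v)) (hw : IsChild w (c w)) (hmod : (v.1 : ℕ) % 3 = (w.1 : ℕ) % 3)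
    (hx : x ∈ s(v, c v)) (hy : y ∈ s(w, c w)) (hxy : x = y ∨ IsChild x y) : v = w := by
  -- Equal levels are settled by uniqueness of parents, the other cases contradict `hmod`.
  have hlv := hv.1
  have hlw := hw.1
  rcases Sym2.mem_iff.1 hx with rfl | rfl <;> rcases Sym2.mem_iff.1 hy with rfl | rfl <;>
    rcases hxy with hxy | hxy
  all_goals first
    | exact hxy
    | exact hxy.unique hw
    | exact hv.unique (hxy ▸ hw)
    | (have := hxy.1; omega)
    | (have := congrArg (fun u : SemiVert n k => (u.1 : ℕ)) hxy; omega)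

lemma isInducedMatching_image_isChild {S : Finset (SemiVert n k)}
    {c : SemiVert n k → SemiVert n k} (hc : ∀ v ∈ S, IsChild v (c v))
    (hS : ∀ v ∈ S, ∀ w ∈ S, (v.1 : ℕ) % 3 = (w.1 : ℕ) % 3) :
    IsInducedMatching (semiTree n k) (S.image fun v => s(v, c v) : Finset _) := by
  rw [coe_image]
  refine ⟨Set.image_subset_iff.2 fun v hv => (hc v hv).adj, ?_⟩
  simp only [Set.forall_mem_image, mem_coe]
  intro v hv w hw hne x hx y hy
  have hvw : v ≠ w := fun h => hne (h ▸ rfl)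
  have hmod := hS v hv w hw
  refine ⟨fun h => hvw (eq_of_mem_mk_isChild (hc v hv) (hc w hw) hmod hx hy (Or.inl h)),
    fun h => hvw ?_⟩
  rcases semiTree_adj_iff.1 h with h | h
  · exact eq_of_mem_mk_isChild (hc v hv) (hc w hw) hmod hx hy (Or.inr h)
  · exact (eq_of_mem_mk_isChild (hc w hw) (hc v hv) hmod.symm hy hx (Or.inr h)).symm

lemma exists_isInducedMatching_card_eq (hn : 2 ≤ n) :
    ∃ M : Finset (Sym2 (SemiVert n k)),
      IsInducedMatching (semiTree n k) M ∧ #M = everyThirdLevelSum n k := by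
  have : Nonempty (SemiVert n k) := ⟨⟨0, 0, by simp [semiLevel]⟩⟩
  choose! c hc using fun v : SemiVert n k => exists_isChild hn (v := v)
  set S : Finset (SemiVert n k) := {v | (v.1 : ℕ) ∈ {a ∈ range k | a % 3 = (k + 2) % 3}}
  have hS : ∀ v ∈ S, (v.1 : ℕ) < k ∧ (v.1 : ℕ) % 3 = (k + 2) % 3 := by simp [S]
  refine ⟨S.image fun v => s(v, c v), isInducedMatching_image_isChild
    (fun v hv => hc v (hS v hv).1) fun v hv w hw => (hS v hv).2.trans (hS w hw).2.symm, ?_⟩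
  rw [card_image_of_injOn, card_filter_fst_mem _ (by simp; omega), everyThirdLevelSum]
  intro v hv w hw h
  rcases Sym2.eq_iff.1 h with ⟨h, -⟩ | ⟨h₁, h₂⟩
  · exact h
  · have := (hc v (hS v hv).1).1
    have := congrArg (fun u : SemiVert n k => (u.1 : ℕ)) h₁
    have := congrArg (fun u : SemiVert n k => (u.1 : ℕ)) h₂
    have := (hc w (hS w hw).1).1
    omega

theorem indMatchNum_semiTree_eq_everyThirdLevelSum (hn : 2 ≤ n) :
    indMatchNum (semiTree n k) = everyThirdLevelSum n k := by
  refine IsGreatest.csSup_eq ⟨exists_isInducedMatching_card_eq hn, ?_⟩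
  rintro _ ⟨M, hM, rfl⟩
  exact card_le_everyThirdLevelSum hn hM

lemma cast_semiLevel_succ (hn : 1 ≤ n) (a : ℕ) :
    (semiLevel n (a + 1) : ℚ) = n * (n - 1) ^ a := by
  simp [semiLevel, Nat.cast_sub hn]

lemma everyThirdLevelSum_mul_sub_periodic (hn : 1 ≤ n) (K : ℕ) :
    (everyThirdLevelSum n K : ℚ) * ((n - 1) ^ 3 - 1) - n * (n - 1) ^ (K + 1)
      = everyThirdLevelSum n (K % 3) * ((n - 1) ^ 3 - 1) - n * (n - 1) ^ (K % 3 + 1) := by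
  induction K using Nat.strong_induction_on with
  | _ K ih =>
  rcases lt_or_ge K 3 with hK | hK
  · rw [Nat.mod_eq_of_lt hK]
  · obtain ⟨K, rfl⟩ := Nat.exists_eq_add_of_le' hK
    rw [Nat.add_mod_right, ← ih K (by omega), everyThirdLevelSum_add_three]
    push_cast
    rw [cast_semiLevel_succ hn]
    ring

theorem indMatchNum_semiTree_general (n k : ℕ) (hn : 3 ≤ n) :
    (k % 3 = 0 →
      (indMatchNum (semiTree n k) : ℚ) =
        ((n : ℚ) * ((n : ℚ) - 1) ^ (k + 1) - (n : ℚ) * ((n : ℚ) - 1)) / (((n : ℚ) - 1) ^ 3 - 1)) ∧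
    (k % 3 = 1 →
      (indMatchNum (semiTree n k) : ℚ) =
        ((n : ℚ) * ((n : ℚ) - 1) ^ (k + 1) - ((n : ℚ) - 1) ^ 2 - 1) / (((n : ℚ) - 1) ^ 3 - 1)) ∧
    (k % 3 = 2 →
      (indMatchNum (semiTree n k) : ℚ) =
        ((n : ℚ) * ((n : ℚ) - 1) ^ (k + 1) - (n : ℚ)) / (((n : ℚ) - 1) ^ 3 - 1)) := by
  have hd : ((n : ℚ) - 1) ^ 3 - 1 ≠ 0 := by
    have : (2 : ℚ) ≤ n - 1 := by
      have : (3 : ℚ) ≤ n := by exact_mod_cast hn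
      linarith
    have := pow_le_pow_left₀ (by norm_num) this 3
    norm_num at this
    linarith
  obtain ⟨hS₀, hS₁, hS₂⟩ :
      everyThirdLevelSum n 0 = 0 ∧ everyThirdLevelSum n 1 = 1 ∧ everyThirdLevelSum n 2 = n := by
    simp [everyThirdLevelSum, sum_filter, sum_range_succ, semiLevel]
  have key := everyThirdLevelSum_mul_sub_periodic (n := n) (by omega) k
  rw [indMatchNum_semiTree_eq_everyThirdLevelSum (by omega)]
  refine ⟨fun h => ?_, fun h => ?_, fun h => ?_⟩ <;> rw [eq_div_iff hd] <;> rw [h] at key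
  · rw [hS₀] at key
    linear_combination key
  · rw [hS₁] at key
    linear_combination key
  · rw [hS₂] at key
    linear_combination key

theorem indMatchNum_semiTree (n k : ℕ) (hn : 3 ≤ n) (hk : 1 ≤ k) :
    (k % 3 = 0 →
      (indMatchNum (semiTree n k) : ℚ) =
        ((n : ℚ) * ((n : ℚ) - 1) ^ (k + 1) - (n : ℚ) * ((n : ℚ) - 1)) / (((n : ℚ) - 1) ^ 3 - 1)) ∧
    (k % 3 = 1 →
      (indMatchNum (semiTree n k) : ℚ) =
        ((n : ℚ) * ((n : ℚ) - 1) ^ (k + 1) - ((n : ℚ) - 1) ^ 2 - 1) / (((n : ℚ) - 1) ^ 3 - 1)) ∧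
    (k % 3 = 2 →
      (indMatchNum (semiTree n k) : ℚ) =
        ((n : ℚ) * ((n : ℚ) - 1) ^ (k + 1) - (n : ℚ)) / (((n : ℚ) - 1) ^ 3 - 1)) :=
  indMatchNum_semiTree_general n k hn
end
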